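/- arXiv:2412.15531 — 7 statements merged into one kernel-verified Lean document; each statement's English description precedes it below -/
import Mathlib

section
/- Let σ > 0, a > 0 and v̲ < v̄ be reals. Suppose h₋, h₊ : (v̲, v̄) → ℝ are differentiable with 0 < h₋(v) < h₊(v) and f(h₋(v), v) = f(h₊(v), v) = 0 for all v ∈ (v̲, v̄), and define M(v) := ∫_{h₋(v)}^{h₊(v)} f(s,v) ds. Then M is differentiable on (v̲, v̄) with M′(v) = −(4/σ) ∫_{h₋(v)}^{h₊(v)} s/(1+s²) ds < 0; consequently, if M extends continuously to [v̲, v̄] with M(v̲) > 0 and M(v̄) < 0, then M has a unique zero v̂ in (v̲, v̄), and M′(v̂) < 0. -/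
/-!
Write `f(s, v) = ∂ₛΦ(v, s)` with `Φ(v, s) = (1/σ)(a s - s²/2 - 2 v log(1 + s²))`
(`maxwellPotential σ a v s`), so that `M(v) = Φ(v, h₊ v) - Φ(v, h₋ v)`. Since `h₋` and `h₊` are
zeros of `f = ∂ₛΦ`, their motion does not contribute to `M'`, which is therefore
`∂ᵥΦ(v, h₊ v) - ∂ᵥΦ(v, h₋ v) = -(4/σ) ∫_{h₋}^{h₊} s/(1+s²) ds`, negative because `0 < h₋ < h₊`.
A continuous extension of `M` is then strictly decreasing on `[v̲, v̄]`, and the intermediate value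
theorem gives exactly one zero.
-/

open Real Set Filter Topology intervalIntegral

noncomputable def maxwellPotential (σ a v s : ℝ) : ℝ :=
  (1 / σ) * (a * s - s ^ 2 / 2 - 2 * v * log (1 + s ^ 2))

theorem hasDerivAt_log_one_add_sq {h : ℝ → ℝ} {h' x : ℝ} (hd : HasDerivAt h h' x) :
    HasDerivAt (fun t => log (1 + h t ^ 2)) (2 * h x * h' / (1 + h x ^ 2)) x := by
  have hsq : HasDerivAt (fun t => 1 + h t ^ 2) (2 * h x * h') x := by
    simpa using (hd.pow 2).const_add 1
  exact hsq.log (by positivity)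

theorem continuous_div_one_add_sq : Continuous fun s : ℝ => s / (1 + s ^ 2) :=
  continuous_id.div (by fun_prop) fun s => by positivity

theorem integral_div_one_add_sq (b c : ℝ) :
    ∫ s in b..c, s / (1 + s ^ 2) = (log (1 + c ^ 2) - log (1 + b ^ 2)) / 2 := by
  have hderiv : ∀ x, HasDerivAt (fun s => log (1 + s ^ 2) / 2) (x / (1 + x ^ 2)) x := fun x => by
    refine ((hasDerivAt_log_one_add_sq (hasDerivAt_id x)).div_const 2).congr_deriv ?_
    simp only [id]
    field_simp
  rw [integral_eq_sub_of_hasDerivAt (fun x _ => hderiv x)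
    (continuous_div_one_add_sq.intervalIntegrable _ _), sub_div]

theorem integral_div_one_add_sq_pos {b c : ℝ} (hb : 0 ≤ b) (hbc : b < c) :
    0 < ∫ s in b..c, s / (1 + s ^ 2) := by
  refine intervalIntegral_pos_of_pos_on (continuous_div_one_add_sq.intervalIntegrable _ _)
    (fun x hx => ?_) hbc
  have : 0 < x := hb.trans_lt hx.1
  positivity

theorem hasDerivAt_maxwellPotential (σ a v x : ℝ) :
    HasDerivAt (maxwellPotential σ a v) ((1 / σ) * (a - x - 4 * x * v / (1 + x ^ 2))) x := by
  have hx : (1 : ℝ) + x ^ 2 ≠ 0 := by positivity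
  have hΦ := ((((hasDerivAt_id x).const_mul a).sub (((hasDerivAt_id x).pow 2).div_const 2)).sub
    ((hasDerivAt_log_one_add_sq (hasDerivAt_id x)).const_mul (2 * v))).const_mul (1 / σ)
  refine hΦ.congr_deriv ?_
  simp only [id]
  field_simp
  ring

theorem integral_eq_maxwellPotential_sub (σ a v b c : ℝ) :
    ∫ s in b..c, (1 / σ) * (a - s - 4 * s * v / (1 + s ^ 2))
      = maxwellPotential σ a v c - maxwellPotential σ a v b := by
  have hcont : Continuous fun s : ℝ => (1 / σ) * (a - s - 4 * s * v / (1 + s ^ 2)) :=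
    continuous_const.mul <| (continuous_const.sub continuous_id).sub <|
      (by fun_prop : Continuous fun s : ℝ => 4 * s * v).div (by fun_prop) fun s => by positivity
  exact integral_eq_sub_of_hasDerivAt (fun x _ => hasDerivAt_maxwellPotential σ a v x)
    (hcont.intervalIntegrable _ _)

theorem hasDerivAt_maxwellPotential_comp (σ a : ℝ) {h : ℝ → ℝ} {h' v : ℝ}
    (hd : HasDerivAt h h' v) (hz : (1 / σ) * (a - h v - 4 * h v * v / (1 + h v ^ 2)) = 0) :
    HasDerivAt (fun t => maxwellPotential σ a t (h t)) (-(2 / σ) * log (1 + h v ^ 2)) v := by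
  have hlin : HasDerivAt (fun t : ℝ => 2 * t) 2 v := by
    simpa using (hasDerivAt_id v).const_mul 2
  have hΦ := (((hd.const_mul a).sub ((hd.pow 2).div_const 2)).sub
    (hlin.mul (hasDerivAt_log_one_add_sq hd))).const_mul (1 / σ)
  refine hΦ.congr_deriv ?_
  linear_combination h' * hz

theorem hasDerivAt_maxwell (σ a : ℝ) {hm hp : ℝ → ℝ} {v : ℝ}
    (hdm : DifferentiableAt ℝ hm v) (hdp : DifferentiableAt ℝ hp v)
    (hzm : (1 / σ) * (a - hm v - 4 * hm v * v / (1 + hm v ^ 2)) = 0)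
    (hzp : (1 / σ) * (a - hp v - 4 * hp v * v / (1 + hp v ^ 2)) = 0) :
    HasDerivAt (fun t => ∫ s in hm t..hp t, (1 / σ) * (a - s - 4 * s * t / (1 + s ^ 2)))
      (-(4 / σ) * ∫ s in hm v..hp v, s / (1 + s ^ 2)) v := by
  simp only [integral_eq_maxwellPotential_sub]
  refine ((hasDerivAt_maxwellPotential_comp σ a hdp.hasDerivAt hzp).sub
    (hasDerivAt_maxwellPotential_comp σ a hdm.hasDerivAt hzm)).congr_deriv ?_
  rw [integral_div_one_add_sq]
  ring

theorem existsUnique_zero_of_strictAntiOn {f : ℝ → ℝ} {b c : ℝ} (hbc : b < c)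
    (hcont : ContinuousOn f (Icc b c)) (hanti : StrictAntiOn f (Icc b c))
    (hb : 0 < f b) (hc : f c < 0) : ∃! x, x ∈ Ioo b c ∧ f x = 0 := by
  obtain ⟨x, hx, hfx⟩ := intermediate_value_Icc' hbc.le hcont ⟨hc.le, hb.le⟩
  have hxb : x ≠ b := by rintro rfl; linarith
  have hxc : x ≠ c := by rintro rfl; linarith
  refine ⟨x, ⟨⟨hx.1.lt_of_ne' hxb, hx.2.lt_of_ne hxc⟩, hfx⟩, fun y ⟨hy, hfy⟩ => ?_⟩
  exact hanti.injOn (Ioo_subset_Icc_self hy) hx (hfy.trans hfx.symm)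

theorem stmt_3_general (σ a vlo vhi : ℝ) (hσ : 0 < σ) (hv : vlo < vhi)
    (hm hp : ℝ → ℝ)
    (hdm : ∀ v ∈ Set.Ioo vlo vhi, DifferentiableAt ℝ hm v)
    (hdp : ∀ v ∈ Set.Ioo vlo vhi, DifferentiableAt ℝ hp v)
    (hord : ∀ v ∈ Set.Ioo vlo vhi, 0 < hm v ∧ hm v < hp v)
    (hzm : ∀ v ∈ Set.Ioo vlo vhi,
      (1 / σ) * (a - hm v - 4 * hm v * v / (1 + (hm v) ^ 2)) = 0)
    (hzp : ∀ v ∈ Set.Ioo vlo vhi,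
      (1 / σ) * (a - hp v - 4 * hp v * v / (1 + (hp v) ^ 2)) = 0)
    (M : ℝ → ℝ)
    (hM : ∀ v, M v = ∫ s in (hm v)..(hp v), (1 / σ) * (a - s - 4 * s * v / (1 + s ^ 2))) :
    (∀ v ∈ Set.Ioo vlo vhi,
      HasDerivAt M (-(4 / σ) * ∫ s in (hm v)..(hp v), s / (1 + s ^ 2)) v ∧
      -(4 / σ) * (∫ s in (hm v)..(hp v), s / (1 + s ^ 2)) < 0) ∧
    (∀ Mbar : ℝ → ℝ, ContinuousOn Mbar (Set.Icc vlo vhi) →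
      (∀ v ∈ Set.Ioo vlo vhi, Mbar v = M v) →
      0 < Mbar vlo → Mbar vhi < 0 →
      (∃! vhat : ℝ, vhat ∈ Set.Ioo vlo vhi ∧ Mbar vhat = 0) ∧
      ∀ vhat ∈ Set.Ioo vlo vhi, Mbar vhat = 0 → deriv M vhat < 0) := by
  have hMfun : M = fun t => ∫ s in hm t..hp t, (1 / σ) * (a - s - 4 * s * t / (1 + s ^ 2)) :=
    funext hM
  have hderiv : ∀ v ∈ Ioo vlo vhi,
      HasDerivAt M (-(4 / σ) * ∫ s in hm v..hp v, s / (1 + s ^ 2)) v ∧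
      -(4 / σ) * (∫ s in hm v..hp v, s / (1 + s ^ 2)) < 0 := fun v hvI =>
    ⟨hMfun ▸ hasDerivAt_maxwell σ a (hdm v hvI) (hdp v hvI) (hzm v hvI) (hzp v hvI),
      mul_neg_of_neg_of_pos (by simpa using hσ)
        (integral_div_one_add_sq_pos (hord v hvI).1.le (hord v hvI).2)⟩
  refine ⟨hderiv, fun Mbar hcont hagree hlo hhi =>
    ⟨?_, fun w hw _ => (hderiv w hw).1.deriv ▸ (hderiv w hw).2⟩⟩
  refine existsUnique_zero_of_strictAntiOn hv hcont ?_ hlo hhi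
  refine strictAntiOn_of_deriv_neg (convex_Icc _ _) hcont fun x hx => ?_
  rw [interior_Icc] at hx
  have hMbar : Mbar =ᶠ[𝓝 x] M := eventually_of_mem (isOpen_Ioo.mem_nhds hx) hagree
  rw [hMbar.deriv_eq, (hderiv x hx).1.deriv]
  exact (hderiv x hx).2

/-- Properties of the Maxwell (equal-area) function
`M(v) = ∫_{h₋(v)}^{h₊(v)} f(s,v) ds` for `f(u,v) = (1/σ)(a - u - 4uv/(1+u²))`:
`M` is differentiable with `M'(v) = -(4/σ)∫_{h₋(v)}^{h₊(v)} s/(1+s²) ds < 0`, and if `M`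
extends continuously to `[v̲, v̄]` with `M(v̲) > 0` and `M(v̄) < 0`, then `M` has a
unique zero `v̂` in `(v̲, v̄)`, with `M'(v̂) < 0`. -/
theorem stmt_3 (σ a vlo vhi : ℝ) (hσ : 0 < σ) (ha : 0 < a) (hv : vlo < vhi)
    (hm hp : ℝ → ℝ)
    (hdm : ∀ v ∈ Set.Ioo vlo vhi, DifferentiableAt ℝ hm v)
    (hdp : ∀ v ∈ Set.Ioo vlo vhi, DifferentiableAt ℝ hp v)
    (hord : ∀ v ∈ Set.Ioo vlo vhi, 0 < hm v ∧ hm v < hp v)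
    (hzm : ∀ v ∈ Set.Ioo vlo vhi,
      (1 / σ) * (a - hm v - 4 * hm v * v / (1 + (hm v) ^ 2)) = 0)
    (hzp : ∀ v ∈ Set.Ioo vlo vhi,
      (1 / σ) * (a - hp v - 4 * hp v * v / (1 + (hp v) ^ 2)) = 0)
    (M : ℝ → ℝ)
    (hM : ∀ v, M v = ∫ s in (hm v)..(hp v), (1 / σ) * (a - s - 4 * s * v / (1 + s ^ 2))) :
    (∀ v ∈ Set.Ioo vlo vhi,
      HasDerivAt M (-(4 / σ) * ∫ s in (hm v)..(hp v), s / (1 + s ^ 2)) v ∧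
      -(4 / σ) * (∫ s in (hm v)..(hp v), s / (1 + s ^ 2)) < 0) ∧
    (∀ Mbar : ℝ → ℝ, ContinuousOn Mbar (Set.Icc vlo vhi) →
      (∀ v ∈ Set.Ioo vlo vhi, Mbar v = M v) →
      0 < Mbar vlo → Mbar vhi < 0 →
      (∃! vhat : ℝ, vhat ∈ Set.Ioo vlo vhi ∧ Mbar vhat = 0) ∧
      ∀ vhat ∈ Set.Ioo vlo vhi, Mbar vhat = 0 → deriv M vhat < 0) :=
  stmt_3_general σ a vlo vhi hσ hv hm hp hdm hdp hord hzm hzp M hM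
end

section
/- Let (γ_n)_{n≥0} be positive reals with inf_n γ_n > 0 and (a_n)_{n≥0} nonnegative reals, not all zero, with Σ_n a_n/γ_n < ∞. Let ρ₀ ∈ ℝ, k₁ ∈ ℝ, k₂ ≥ 0, and τ > Σ_n a_n/γ_n². Define F*(λ) := ρ₀ − 2k₁ − τλ − Σ_n a_n/(γ_n + 2k₂ + λ) for complex λ with Re λ ≥ 0. Then F* has no zero λ with Re λ ≥ 0 and Im λ ≠ 0. -/
/-- The complex SLEP function `F*(λ) = ρ₀ - 2k₁ - τλ - Σ_n a_n/(γ_n + 2k₂ + λ)` has no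
zero `λ` with `Re λ ≥ 0` and `Im λ ≠ 0`, provided `τ > Σ_n a_n/γ_n²`. -/
theorem stmt_6 (γ a : ℕ → ℝ) (c : ℝ) (hc : 0 < c) (hγ : ∀ n, c ≤ γ n)
    (ha : ∀ n, 0 ≤ a n) (hne : ∃ n, a n ≠ 0)
    (hsum : Summable fun n => a n / γ n)
    (ρ₀ k₁ k₂ τ : ℝ) (hk₂ : 0 ≤ k₂)
    (hτ : (∑' n, a n / (γ n) ^ 2) < τ) :
    ∀ l : ℂ, 0 ≤ l.re → l.im ≠ 0 →
      (ρ₀ : ℂ) - 2 * k₁ - τ * l - ∑' n, (a n : ℂ) / ((γ n : ℂ) + 2 * k₂ + l) ≠ 0 := by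
  intro l hre him
  set z : ℕ → ℂ := fun n => (γ n : ℂ) + 2 * k₂ + l with hz
  have hγpos : ∀ n, 0 < γ n := fun n => lt_of_lt_of_le hc (hγ n)
  have hzre : ∀ n, γ n ≤ (z n).re := by
    intro n
    simp [hz, Complex.add_re]
    linarith [hγ n]
  have hzim : ∀ n, (z n).im = l.im := by
    intro n; simp [hz]
  have hnsq : ∀ n, γ n ^ 2 ≤ Complex.normSq (z n) := by
    intro n
    have h1 : γ n ^ 2 ≤ (z n).re ^ 2 := by
      apply pow_le_pow_left₀ (le_of_lt (hγpos n)) (hzre n)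
    have := Complex.normSq_apply (z n)
    nlinarith [sq_nonneg (z n).im]
  have hnsqpos : ∀ n, 0 < Complex.normSq (z n) := fun n =>
    lt_of_lt_of_le (pow_pos (hγpos n) 2) (hnsq n)
  -- summability of the complex series
  have hS : Summable fun n => (a n : ℂ) / z n := by
    apply Summable.of_norm
    apply Summable.of_nonneg_of_le (fun n => norm_nonneg _) _ hsum
    intro n
    rw [norm_div, Complex.norm_real, Real.norm_of_nonneg (ha n)]
    apply div_le_div_of_nonneg_left (ha n) (hγpos n) ?_ |>.trans_eq rfl
    calc γ n ≤ |(z n).re| := (hzre n).trans (le_abs_self _)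
      _ ≤ ‖z n‖ := Complex.abs_re_le_norm _
  -- summability of a n / γ n ^ 2 and a n / normSq
  have hsum2 : Summable fun n => a n / γ n ^ 2 := by
    apply Summable.of_nonneg_of_le (fun n => div_nonneg (ha n) (sq_nonneg _))
      (fun n => ?_) (hsum.div_const c)
    rw [div_div]
    apply div_le_div_of_nonneg_left (ha n) (mul_pos (hγpos n) hc)
    nlinarith [hγ n, hγpos n]
  have hsumN : Summable fun n => a n / Complex.normSq (z n) := by
    apply Summable.of_nonneg_of_le (fun n => div_nonneg (ha n) (le_of_lt (hnsqpos n)))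
      (fun n => div_le_div_of_nonneg_left (ha n) (pow_pos (hγpos n) 2) (hnsq n)) hsum2
  have hle : (∑' n, a n / Complex.normSq (z n)) ≤ ∑' n, a n / γ n ^ 2 :=
    Summable.tsum_le_tsum (fun n => div_le_div_of_nonneg_left (ha n) (pow_pos (hγpos n) 2) (hnsq n))
      hsumN hsum2
  intro heq
  have him0 := congrArg Complex.im heq
  have htsum_im : (∑' n, (a n : ℂ) / z n).im = ∑' n, (-(a n) * l.im / Complex.normSq (z n)) := by
    rw [Complex.im_tsum hS]
    congr 1
    funext n
    simp [Complex.div_im, hzim n]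
    ring
  have hterm : ∀ n, -(a n) * l.im / Complex.normSq (z n)
      = -l.im * (a n / Complex.normSq (z n)) := by
    intro n; ring
  simp only [Complex.sub_im, Complex.ofReal_im, Complex.mul_im, Complex.ofReal_re,
    Complex.zero_im] at him0
  rw [htsum_im] at him0
  simp only [hterm] at him0
  rw [tsum_mul_left] at him0
  norm_num at him0
  have hτeq : τ = ∑' n, a n / Complex.normSq (z n) :=
    mul_left_cancel₀ him (by linarith [him0])
  linarith [hle]
end

section
/- Let (γ_n)_{n≥0} be positive reals with inf_n γ_n > 0 and (a_n)_{n≥0} nonnegative reals, not all zero, with Σ_n a_n/γ_n > ρ₀ > 0, and let τ > Σ_n a_n/γ_n². For k₁, k₂ > 0 define F*(λ) := ρ₀ − 2k₁ − τλ − Σ_n a_n/(γ_n + 2k₂ + λ) for complex λ with Re λ ≥ 0, and for k₁ ∈ (0,ρ₀/2) let ξ(k₁) > 0 be the unique solution of Σ_n a_n/(γ_n + 2ξ(k₁)) = ρ₀ − 2k₁. Then: (1) if 0 < k₁ < ρ₀/2 and 0 < k₂ < ξ(k₁), F* has no zero with Re λ ≥ 0; if k₂ > ξ(k₁), F* has exactly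 one zero with Re λ ≥ 0 and it is a positive real number; if k₂ = ξ(k₁), λ = 0 is a zero of F*; (2) if k₁ > ρ₀/2, then F* has no zero with Re λ ≥ 0, for every k₂ > 0. -/
/-!
For `Re λ ≥ 0` one has `Im F*(λ) = Im λ · (Σ a_n / |γ_n + 2k₂ + λ|² - τ)`, and the bracket is at
most `τ* - τ < 0`; so every zero in the closed right half-plane is real. On `[0, ∞)` the function
`x ↦ F*(x)` is strictly decreasing, since its slope is at most `τ* - τ`. Its sign at `x = 0`,
that of `ρ₀ - 2k₁ - Σ a_n / (γ_n + 2k₂)`, therefore decides everything: it is negative whenever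
`2k₁ > ρ₀`, and otherwise, `k₂ ↦ Σ a_n / (γ_n + 2k₂)` being strictly decreasing, it is read off
from the position of `k₂` relative to `ξ(k₁)`.
-/

open Set

namespace Slep

variable {γ a : ℕ → ℝ}

section Sums

lemma summable_div_add (hγ : ∀ n, 0 < γ n) (ha : ∀ n, 0 ≤ a n)
    (hsum : Summable fun n => a n / γ n) {t : ℝ} (ht : 0 ≤ t) :
    Summable fun n => a n / (γ n + t) :=
  hsum.of_nonneg_of_le (fun n => div_nonneg (ha n) (by linarith [hγ n]))
    (fun n => div_le_div_of_nonneg_left (ha n) (hγ n) (by linarith))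

lemma summable_div_sq {c : ℝ} (hc : 0 < c) (hγ : ∀ n, c ≤ γ n) (ha : ∀ n, 0 ≤ a n)
    (hsum : Summable fun n => a n / γ n) : Summable fun n => a n / γ n ^ 2 := by
  refine (hsum.div_const c).of_nonneg_of_le (fun n => div_nonneg (ha n) (sq_nonneg _))
    fun n => ?_
  rw [sq, ← div_div]
  exact div_le_div_of_nonneg_left (div_nonneg (ha n) (hc.trans_le (hγ n)).le) hc (hγ n)

lemma tsum_div_add_nonneg (hγ : ∀ n, 0 < γ n) (ha : ∀ n, 0 ≤ a n) {t : ℝ} (ht : 0 ≤ t) :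
    0 ≤ ∑' n, a n / (γ n + t) :=
  tsum_nonneg fun n => div_nonneg (ha n) (by linarith [hγ n])

lemma strictAntiOn_tsum_div_add (hγ : ∀ n, 0 < γ n) (ha : ∀ n, 0 ≤ a n) (hne : ∃ n, a n ≠ 0)
    (hsum : Summable fun n => a n / γ n) :
    StrictAntiOn (fun t => ∑' n, a n / (γ n + t)) (Ici 0) := by
  intro t₁ (ht₁ : 0 ≤ t₁) t₂ (ht₂ : 0 ≤ t₂) h
  obtain ⟨m, hm⟩ := hne
  refine (summable_div_add hγ ha hsum ht₂).tsum_lt_tsum (i := m) (fun n => ?_) ?_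
    (summable_div_add hγ ha hsum ht₁)
  · exact div_le_div_of_nonneg_left (ha n) (by linarith [hγ n]) (by linarith)
  · exact div_lt_div_of_pos_left ((ha m).lt_of_ne' hm) (by linarith [hγ m]) (by linarith)

lemma div_add_sub_div_add_le {γ a t₁ t₂ : ℝ} (hγ : 0 < γ) (ha : 0 ≤ a) (h₁ : 0 ≤ t₁)
    (h₁₂ : t₁ ≤ t₂) : a / (γ + t₁) - a / (γ + t₂) ≤ a / γ ^ 2 * (t₂ - t₁) := by
  rw [div_sub_div _ _ (by linarith) (by linarith)]
  calc (a * (γ + t₂) - (γ + t₁) * a) / ((γ + t₁) * (γ + t₂))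
      = a * (t₂ - t₁) / ((γ + t₁) * (γ + t₂)) := by ring
    _ ≤ a * (t₂ - t₁) / γ ^ 2 :=
        div_le_div_of_nonneg_left (mul_nonneg ha (by linarith)) (by positivity) (by nlinarith)
    _ = a / γ ^ 2 * (t₂ - t₁) := by ring

lemma tsum_div_add_sub_tsum_div_add_le (hγ : ∀ n, 0 < γ n) (ha : ∀ n, 0 ≤ a n)
    (hsum : Summable fun n => a n / γ n) (hT : Summable fun n => a n / γ n ^ 2)
    {t₁ t₂ : ℝ} (h₁ : 0 ≤ t₁) (h₁₂ : t₁ ≤ t₂) :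
    ∑' n, a n / (γ n + t₁) - ∑' n, a n / (γ n + t₂) ≤ (∑' n, a n / γ n ^ 2) * (t₂ - t₁) := by
  have hs₁ := summable_div_add hγ ha hsum h₁
  have hs₂ := summable_div_add hγ ha hsum (h₁.trans h₁₂)
  rw [← hs₁.tsum_sub hs₂, ← tsum_mul_right]
  exact (hs₁.sub hs₂).tsum_le_tsum (fun n => div_add_sub_div_add_le (hγ n) (ha n) h₁ h₁₂)
    (hT.mul_right _)

lemma continuousOn_tsum_div_add (hγ : ∀ n, 0 < γ n) (ha : ∀ n, 0 ≤ a n)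
    (hsum : Summable fun n => a n / γ n) :
    ContinuousOn (fun t => ∑' n, a n / (γ n + t)) (Ici 0) := by
  refine continuousOn_tsum (fun n => ?_) hsum fun n t (ht : 0 ≤ t) => ?_
  · exact continuousOn_const.div (continuousOn_const.add continuousOn_id)
      fun t (ht : 0 ≤ t) => by linarith [hγ n]
  · rw [Real.norm_of_nonneg (div_nonneg (ha n) (by linarith [hγ n]))]
    exact div_le_div_of_nonneg_left (ha n) (hγ n) (by linarith)

end Sums

section ComplexSums

lemma le_norm_ofReal_add (x : ℝ) {w : ℂ} (hw : 0 ≤ w.re) : x ≤ ‖(x : ℂ) + w‖ :=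
  calc x ≤ ((x : ℂ) + w).re := by simp; linarith
    _ ≤ ‖(x : ℂ) + w‖ := Complex.re_le_norm _

lemma summable_ofReal_div_add (hγ : ∀ n, 0 < γ n) (ha : ∀ n, 0 ≤ a n)
    (hsum : Summable fun n => a n / γ n) {w : ℂ} (hw : 0 ≤ w.re) :
    Summable fun n => (a n : ℂ) / (γ n + w) := by
  refine Summable.of_norm (hsum.of_nonneg_of_le (fun n => norm_nonneg _) fun n => ?_)
  rw [norm_div, Complex.norm_real, Real.norm_of_nonneg (ha n)]
  exact div_le_div_of_nonneg_left (ha n) (hγ n) (le_norm_ofReal_add _ hw)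

lemma re_tsum_ofReal_div_add_nonneg (hγ : ∀ n, 0 < γ n) (ha : ∀ n, 0 ≤ a n)
    (hsum : Summable fun n => a n / γ n) {w : ℂ} (hw : 0 ≤ w.re) :
    0 ≤ (∑' n, (a n : ℂ) / (γ n + w)).re := by
  rw [Complex.re_tsum (summable_ofReal_div_add hγ ha hsum hw)]
  refine tsum_nonneg fun n => ?_
  rw [Complex.div_re]
  simp only [Complex.ofReal_re, Complex.ofReal_im, zero_mul, zero_div, add_zero, Complex.add_re]
  exact div_nonneg (mul_nonneg (ha n) (by linarith [hγ n])) (Complex.normSq_nonneg _)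

lemma im_tsum_ofReal_div_add (hγ : ∀ n, 0 < γ n) (ha : ∀ n, 0 ≤ a n)
    (hsum : Summable fun n => a n / γ n) {w : ℂ} (hw : 0 ≤ w.re) :
    (∑' n, (a n : ℂ) / (γ n + w)).im = -(w.im * ∑' n, a n / Complex.normSq (γ n + w)) := by
  rw [Complex.im_tsum (summable_ofReal_div_add hγ ha hsum hw), ← tsum_mul_left, ← tsum_neg]
  refine tsum_congr fun n => ?_
  rw [Complex.div_im]
  simp only [Complex.ofReal_re, Complex.ofReal_im, Complex.add_im]
  ring

lemma tsum_div_normSq_add_le (hγ : ∀ n, 0 < γ n) (ha : ∀ n, 0 ≤ a n)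
    (hT : Summable fun n => a n / γ n ^ 2) {w : ℂ} (hw : 0 ≤ w.re) :
    ∑' n, a n / Complex.normSq (γ n + w) ≤ ∑' n, a n / γ n ^ 2 := by
  have hle : ∀ n, a n / Complex.normSq (γ n + w) ≤ a n / γ n ^ 2 := fun n => by
    rw [Complex.normSq_eq_norm_sq]
    exact div_le_div_of_nonneg_left (ha n) (pow_pos (hγ n) 2)
      (pow_le_pow_left₀ (hγ n).le (le_norm_ofReal_add _ hw) 2)
  exact (hT.of_nonneg_of_le (fun n => div_nonneg (ha n) (Complex.normSq_nonneg _)) hle).tsum_le_tsum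
    hle hT

end ComplexSums

/-- `F*(λ)`, in the shape of `hF` so that `F` can be replaced by it. -/
noncomputable def slep (γ a : ℕ → ℝ) (ρ₀ τ k₁ k₂ : ℝ) (l : ℂ) : ℂ :=
  (ρ₀ : ℂ) - 2 * k₁ - τ * l - ∑' n, (a n : ℂ) / ((γ n : ℂ) + 2 * k₂ + l)

noncomputable def slepReal (γ a : ℕ → ℝ) (ρ₀ τ k₁ k₂ x : ℝ) : ℝ :=
  ρ₀ - 2 * k₁ - τ * x - ∑' n, a n / (γ n + (2 * k₂ + x))

section SlepFunction

variable {ρ₀ τ k₁ k₂ : ℝ}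

lemma slep_eq (l : ℂ) :
    slep γ a ρ₀ τ k₁ k₂ l = ρ₀ - 2 * k₁ - τ * l - ∑' n, (a n : ℂ) / (γ n + (2 * k₂ + l)) := by
  simp only [slep, add_assoc]

lemma slep_ofReal (x : ℝ) : slep γ a ρ₀ τ k₁ k₂ x = slepReal γ a ρ₀ τ k₁ k₂ x := by
  simp only [slep_eq, slepReal, Complex.ofReal_sub, Complex.ofReal_mul, Complex.ofReal_ofNat,
    Complex.ofReal_tsum, Complex.ofReal_div, Complex.ofReal_add]

lemma slepReal_zero :
    slepReal γ a ρ₀ τ k₁ k₂ 0 = ρ₀ - 2 * k₁ - ∑' n, a n / (γ n + 2 * k₂) := by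
  simp [slepReal]

lemma slep_eq_zero_iff (hγ : ∀ n, 0 < γ n) (ha : ∀ n, 0 ≤ a n)
    (hsum : Summable fun n => a n / γ n) (hT : Summable fun n => a n / γ n ^ 2)
    (hτ : ∑' n, a n / γ n ^ 2 < τ) (hk₂ : 0 ≤ k₂) {l : ℂ} (hl : 0 ≤ l.re) :
    slep γ a ρ₀ τ k₁ k₂ l = 0 ↔ l.im = 0 ∧ slepReal γ a ρ₀ τ k₁ k₂ l.re = 0 := by
  have hw : 0 ≤ (2 * (k₂ : ℂ) + l).re := by simp; linarith
  constructor
  · intro h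
    have him : l.im = 0 := by
      have h_im := congrArg Complex.im h
      rw [slep_eq, Complex.sub_im, im_tsum_ofReal_div_add hγ ha hsum hw] at h_im
      have hQ := tsum_div_normSq_add_le hγ ha hT hw
      set Q := ∑' n, a n / Complex.normSq (γ n + (2 * k₂ + l))
      simp only [Complex.sub_im, Complex.mul_im, Complex.ofReal_re, Complex.ofReal_im,
        Complex.add_im, Complex.zero_im, Complex.re_ofNat, Complex.im_ofNat] at h_im
      have hfac : l.im * (τ - Q) = 0 := by linear_combination -h_im
      exact (mul_eq_zero.1 hfac).resolve_right (by linarith)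
    refine ⟨him, ?_⟩
    rw [← Complex.ofReal_inj, ← slep_ofReal, Complex.ofReal_zero]
    convert h using 2
    exact Complex.ext (by simp) (by simp [him])
  · rintro ⟨him, hre⟩
    rw [show l = l.re from Complex.ext rfl (by simp [him]), slep_ofReal, hre, Complex.ofReal_zero]

lemma strictAntiOn_slepReal (hγ : ∀ n, 0 < γ n) (ha : ∀ n, 0 ≤ a n)
    (hsum : Summable fun n => a n / γ n) (hT : Summable fun n => a n / γ n ^ 2)
    (hτ : ∑' n, a n / γ n ^ 2 < τ) (hk₂ : 0 ≤ k₂) :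
    StrictAntiOn (slepReal γ a ρ₀ τ k₁ k₂) (Ici 0) := by
  intro x₁ (hx₁ : 0 ≤ x₁) x₂ _ h
  have hdiff := tsum_div_add_sub_tsum_div_add_le hγ ha hsum hT
    (t₁ := 2 * k₂ + x₁) (t₂ := 2 * k₂ + x₂) (by linarith) (by linarith)
  have hslope := mul_lt_mul_of_pos_right hτ (sub_pos.2 h)
  simp only [slepReal]
  linarith

lemma continuousOn_slepReal (hγ : ∀ n, 0 < γ n) (ha : ∀ n, 0 ≤ a n)
    (hsum : Summable fun n => a n / γ n) (hk₂ : 0 ≤ k₂) :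
    ContinuousOn (slepReal γ a ρ₀ τ k₁ k₂) (Ici 0) := by
  have hS := (continuousOn_tsum_div_add hγ ha hsum).comp
    (continuousOn_const.add continuousOn_id (s := Ici 0) (f := fun _ => 2 * k₂))
    fun x (hx : 0 ≤ x) => show 0 ≤ 2 * k₂ + x by linarith
  exact (continuousOn_const.sub (continuousOn_const.mul continuousOn_id)).sub hS

lemma slep_ne_zero_of_lt_tsum (hγ : ∀ n, 0 < γ n) (ha : ∀ n, 0 ≤ a n)
    (hsum : Summable fun n => a n / γ n) (hT : Summable fun n => a n / γ n ^ 2)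
    (hτ : ∑' n, a n / γ n ^ 2 < τ) (hk₂ : 0 ≤ k₂)
    (hneg : ρ₀ - 2 * k₁ < ∑' n, a n / (γ n + 2 * k₂)) {l : ℂ} (hl : 0 ≤ l.re) :
    slep γ a ρ₀ τ k₁ k₂ l ≠ 0 := by
  rw [Ne, slep_eq_zero_iff hγ ha hsum hT hτ hk₂ hl]
  rintro ⟨-, hzero⟩
  have hmono : slepReal γ a ρ₀ τ k₁ k₂ l.re ≤ slepReal γ a ρ₀ τ k₁ k₂ 0 :=
    (strictAntiOn_slepReal hγ ha hsum hT hτ hk₂).antitoneOn self_mem_Ici hl hl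
  rw [slepReal_zero] at hmono
  linarith

lemma exists_pos_forall_slep_eq_zero_iff (hγ : ∀ n, 0 < γ n) (ha : ∀ n, 0 ≤ a n)
    (hsum : Summable fun n => a n / γ n) (hT : Summable fun n => a n / γ n ^ 2)
    (hτ : ∑' n, a n / γ n ^ 2 < τ) (hk₂ : 0 ≤ k₂)
    (hpos : ∑' n, a n / (γ n + 2 * k₂) < ρ₀ - 2 * k₁) :
    ∃ x : ℝ, 0 < x ∧ ∀ l : ℂ, 0 ≤ l.re → (slep γ a ρ₀ τ k₁ k₂ l = 0 ↔ l = x) := by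
  have hτ₀ : 0 < τ := (tsum_nonneg fun n => div_nonneg (ha n) (sq_nonneg _)).trans_lt hτ
  have hS₀ := tsum_div_add_nonneg hγ ha (by linarith : 0 ≤ 2 * k₂)
  -- at `b` the linear part `ρ₀ - 2k₁ - τ x` vanishes, so `slepReal` is `≤ 0` there
  set b := (ρ₀ - 2 * k₁) / τ
  have hb : 0 ≤ b := div_nonneg (by linarith) hτ₀.le
  have hfb : slepReal γ a ρ₀ τ k₁ k₂ b ≤ 0 := by
    have hτb : τ * b = ρ₀ - 2 * k₁ := mul_div_cancel₀ _ hτ₀.ne'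
    have hSb := tsum_div_add_nonneg hγ ha (by linarith : 0 ≤ 2 * k₂ + b)
    simp only [slepReal]
    linarith
  have hf0 : 0 < slepReal γ a ρ₀ τ k₁ k₂ 0 := by rw [slepReal_zero]; linarith
  obtain ⟨x, ⟨hx₀, -⟩, hx⟩ := intermediate_value_Icc' hb
    ((continuousOn_slepReal hγ ha hsum hk₂).mono Icc_subset_Ici_self) ⟨hfb, hf0.le⟩
  refine ⟨x, hx₀.lt_of_ne (by rintro rfl; linarith), fun l hl => ?_⟩
  rw [slep_eq_zero_iff hγ ha hsum hT hτ hk₂ hl]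
  constructor
  · rintro ⟨him, hre⟩
    have hxre := (strictAntiOn_slepReal hγ ha hsum hT hτ hk₂).injOn hl hx₀ (hre.trans hx.symm)
    exact Complex.ext (by simpa using hxre) (by simpa using him)
  · rintro rfl
    simpa using hx

end SlepFunction

end Slep

open Slep

theorem stmt_8_general (γ a : ℕ → ℝ) (c : ℝ) (hc : 0 < c) (hγ : ∀ n, c ≤ γ n)
    (ha : ∀ n, 0 ≤ a n) (hne : ∃ n, a n ≠ 0)
    (hsum : Summable fun n => a n / γ n)
    (ρ₀ τ : ℝ)
    (hτ : (∑' n, a n / (γ n) ^ 2) < τ)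
    (F : ℝ → ℝ → ℂ → ℂ)
    (hF : ∀ (k₁ k₂ : ℝ) (l : ℂ),
      F k₁ k₂ l = (ρ₀ : ℂ) - 2 * k₁ - τ * l - ∑' n, (a n : ℂ) / ((γ n : ℂ) + 2 * k₂ + l))
    (ξ : ℝ → ℝ)
    (hξ : ∀ k₁ ∈ Set.Ioo 0 (ρ₀ / 2),
      0 < ξ k₁ ∧ (∑' n, a n / (γ n + 2 * ξ k₁)) = ρ₀ - 2 * k₁) :
    (∀ k₁ ∈ Set.Ioo 0 (ρ₀ / 2),
      (∀ k₂ : ℝ, 0 < k₂ → k₂ < ξ k₁ → ∀ l : ℂ, 0 ≤ l.re → F k₁ k₂ l ≠ 0) ∧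
      (∀ k₂ : ℝ, ξ k₁ < k₂ →
        (∃! l : ℂ, 0 ≤ l.re ∧ F k₁ k₂ l = 0) ∧
        (∀ l : ℂ, 0 ≤ l.re → F k₁ k₂ l = 0 → l.im = 0 ∧ 0 < l.re)) ∧
      F k₁ (ξ k₁) 0 = 0) ∧
    (∀ k₁ : ℝ, ρ₀ / 2 < k₁ → ∀ k₂ : ℝ, 0 < k₂ → ∀ l : ℂ, 0 ≤ l.re → F k₁ k₂ l ≠ 0) := by
  obtain rfl : F = slep γ a ρ₀ τ := funext fun k₁ => funext fun k₂ => funext (hF k₁ k₂)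
  have hγ₀ : ∀ n, 0 < γ n := fun n => hc.trans_le (hγ n)
  have hT := summable_div_sq hc hγ ha hsum
  have hS := strictAntiOn_tsum_div_add hγ₀ ha hne hsum
  refine ⟨fun k₁ hk₁ => ?_, fun k₁ hk₁ k₂ hk₂ l hl => ?_⟩
  · obtain ⟨hξ₀, hξeq⟩ := hξ k₁ hk₁
    refine ⟨fun k₂ hk₂ hlt l hl => ?_, fun k₂ hlt => ?_, ?_⟩
    · refine slep_ne_zero_of_lt_tsum hγ₀ ha hsum hT hτ hk₂.le ?_ hl
      rw [← hξeq]
      exact hS (by simp; positivity) (by simp; positivity) (by linarith)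
    · have habove : ∑' n, a n / (γ n + 2 * k₂) < ρ₀ - 2 * k₁ := by
        rw [← hξeq]
        exact hS (by simp; positivity) (by simp; linarith) (by linarith)
      obtain ⟨x, hx, hzero⟩ := exists_pos_forall_slep_eq_zero_iff hγ₀ ha hsum hT hτ
        (hξ₀.trans hlt).le habove
      refine ⟨⟨x, ⟨by simpa using hx.le, (hzero x (by simpa using hx.le)).2 rfl⟩,
        fun l hl => (hzero l hl.1).1 hl.2⟩, fun l hl h => ?_⟩
      obtain rfl := (hzero l hl).1 h
      simpa using hx
    · rw [← Complex.ofReal_zero, slep_ofReal, slepReal_zero, hξeq, sub_self]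
  · refine slep_ne_zero_of_lt_tsum hγ₀ ha hsum hT hτ hk₂.le ?_ hl
    linarith [tsum_div_add_nonneg hγ₀ ha (by linarith : 0 ≤ 2 * k₂)]

/-- Zeros of the complex SLEP function
`F(k₁,k₂,λ) = ρ₀ - 2k₁ - τλ - Σ_n a_n/(γ_n + 2k₂ + λ)` relative to the Turing curve
`k₂ = ξ(k₁)`: below the curve no zero with `Re λ ≥ 0`; above the curve exactly one such
zero, which is a positive real; on the curve `λ = 0` is a zero; and for `k₁ > ρ₀/2`
no zero with `Re λ ≥ 0` for any `k₂ > 0`. -/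
theorem stmt_8 (γ a : ℕ → ℝ) (c : ℝ) (hc : 0 < c) (hγ : ∀ n, c ≤ γ n)
    (ha : ∀ n, 0 ≤ a n) (hne : ∃ n, a n ≠ 0)
    (hsum : Summable fun n => a n / γ n)
    (ρ₀ τ : ℝ) (hρ : 0 < ρ₀) (hbig : ρ₀ < ∑' n, a n / γ n)
    (hτ : (∑' n, a n / (γ n) ^ 2) < τ)
    (F : ℝ → ℝ → ℂ → ℂ)
    (hF : ∀ (k₁ k₂ : ℝ) (l : ℂ),
      F k₁ k₂ l = (ρ₀ : ℂ) - 2 * k₁ - τ * l - ∑' n, (a n : ℂ) / ((γ n : ℂ) + 2 * k₂ + l))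
    (ξ : ℝ → ℝ)
    (hξ : ∀ k₁ ∈ Set.Ioo 0 (ρ₀ / 2),
      0 < ξ k₁ ∧ (∑' n, a n / (γ n + 2 * ξ k₁)) = ρ₀ - 2 * k₁) :
    (∀ k₁ ∈ Set.Ioo 0 (ρ₀ / 2),
      (∀ k₂ : ℝ, 0 < k₂ → k₂ < ξ k₁ → ∀ l : ℂ, 0 ≤ l.re → F k₁ k₂ l ≠ 0) ∧
      (∀ k₂ : ℝ, ξ k₁ < k₂ →
        (∃! l : ℂ, 0 ≤ l.re ∧ F k₁ k₂ l = 0) ∧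
        (∀ l : ℂ, 0 ≤ l.re → F k₁ k₂ l = 0 → l.im = 0 ∧ 0 < l.re)) ∧
      F k₁ (ξ k₁) 0 = 0) ∧
    (∀ k₁ : ℝ, ρ₀ / 2 < k₁ → ∀ k₂ : ℝ, 0 < k₂ → ∀ l : ℂ, 0 ≤ l.re → F k₁ k₂ l ≠ 0) :=
  stmt_8_general γ a c hc hγ ha hne hsum ρ₀ τ hτ F hF ξ hξ
end

section
/- Let (γ_n)_{n≥0} be positive reals with inf_n γ_n > 0 and (a_n)_{n≥0} nonnegative reals, not all zero, with Σ_n a_n/γ_n < ∞; define X(0,μ,k₂) := Σ_n a_n(γ_n + 2k₂)/((γ_n + 2k₂)² + μ) and Y(0,μ,k₂) := Σ_n a_n/((γ_n + 2k₂)² + μ). Let ρ₀ > 0, k₁ > 0, k₂ > 0, α > 0 and τ > Σ_n a_n/γ_n², and set P(μ) := ρ₀ − k₁(1 + α²/(α² + μ)), Q(μ) := τ − k₁α/(α² + μ). If any one of the following holds: (1) Σ_n a_n/(γ_n + 2k₂) < ρ₀ − 2k₁; (2) k₁ > ρ₀; (3) α ≥ k₁/(τ − Y(0,0,k₂)); then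 there is no μ > 0 satisfying simultaneously X(0,μ,k₂) = P(μ) and Y(0,μ,k₂) = Q(μ). -/
/-- Nonexistence of purely imaginary SLEP-2 eigenvalues: under any of the three
conditions (1) `Σ_n a_n/(γ_n+2k₂) < ρ₀ - 2k₁`, (2) `k₁ > ρ₀`,
(3) `α ≥ k₁/(τ - Y(0,0,k₂))`, there is no `μ > 0` with
`X(0,μ,k₂) = P(μ)` and `Y(0,μ,k₂) = Q(μ)`. -/
theorem stmt_11 (γ a : ℕ → ℝ) (c : ℝ) (hc : 0 < c) (hγ : ∀ n, c ≤ γ n)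
    (ha : ∀ n, 0 ≤ a n) (hne : ∃ n, a n ≠ 0)
    (hsum : Summable fun n => a n / γ n)
    (ρ₀ k₁ k₂ α τ : ℝ) (hρ : 0 < ρ₀) (hk₁ : 0 < k₁) (hk₂ : 0 < k₂) (hα : 0 < α)
    (hτ : (∑' n, a n / (γ n) ^ 2) < τ)
    (X Y P Q : ℝ → ℝ)
    (hX : ∀ μ, X μ = ∑' n, a n * (γ n + 2 * k₂) / ((γ n + 2 * k₂) ^ 2 + μ))
    (hY : ∀ μ, Y μ = ∑' n, a n / ((γ n + 2 * k₂) ^ 2 + μ))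
    (hP : ∀ μ, P μ = ρ₀ - k₁ * (1 + α ^ 2 / (α ^ 2 + μ)))
    (hQ : ∀ μ, Q μ = τ - k₁ * α / (α ^ 2 + μ))
    (hcond : (∑' n, a n / (γ n + 2 * k₂)) < ρ₀ - 2 * k₁ ∨
      ρ₀ < k₁ ∨
      k₁ / (τ - Y 0) ≤ α) :
    ¬ ∃ μ : ℝ, 0 < μ ∧ X μ = P μ ∧ Y μ = Q μ := by
  rintro ⟨μ, hμ, hXP, hYQ⟩
  have hγpos : ∀ n, 0 < γ n := fun n => lt_of_lt_of_le hc (hγ n)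
  have hbpos : ∀ n, 0 < γ n + 2 * k₂ := fun n => by nlinarith [hγpos n]
  have hbγ : ∀ n, γ n ≤ γ n + 2 * k₂ := fun n => by nlinarith
  have hsumc : Summable fun n => a n / γ n / c := hsum.div_const c
  -- auxiliary summabilities
  have hsum1 : Summable fun n => a n / (γ n + 2 * k₂) := by
    refine Summable.of_nonneg_of_le (fun n => div_nonneg (ha n) (hbpos n).le)
      (fun n => ?_) hsum
    exact div_le_div_of_nonneg_left (ha n) (hγpos n) (hbγ n)
  have hden : ∀ (μ' : ℝ), 0 ≤ μ' → ∀ n, γ n * c ≤ (γ n + 2 * k₂) ^ 2 + μ' := by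
    intro μ' hμ' n
    nlinarith [hγ n, hγpos n, hk₂]
  have hsumY : ∀ (μ' : ℝ), 0 ≤ μ' → Summable fun n => a n / ((γ n + 2 * k₂) ^ 2 + μ') := by
    intro μ' hμ'
    refine Summable.of_nonneg_of_le
      (fun n => div_nonneg (ha n) (by nlinarith [hden μ' hμ' n, mul_pos (hγpos n) hc]))
      (fun n => ?_) hsumc
    rw [div_div]
    exact div_le_div_of_nonneg_left (ha n) (mul_pos (hγpos n) hc) (hden μ' hμ' n)
  have hsumX : Summable fun n => a n * (γ n + 2 * k₂) / ((γ n + 2 * k₂) ^ 2 + μ) := by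
    refine Summable.of_nonneg_of_le
      (fun n => div_nonneg (mul_nonneg (ha n) (hbpos n).le) (by nlinarith [hbpos n]))
      (fun n => ?_) hsum1
    rw [div_le_div_iff₀ (by nlinarith [hbpos n]) (hbpos n)]
    nlinarith [mul_nonneg (ha n) hμ.le, hbpos n]
  have hsumγ2 : Summable fun n => a n / γ n ^ 2 := by
    refine Summable.of_nonneg_of_le
      (fun n => div_nonneg (ha n) (by positivity)) (fun n => ?_) hsumc
    rw [div_div]
    exact div_le_div_of_nonneg_left (ha n) (mul_pos (hγpos n) hc)
      (by nlinarith [hγ n, hγpos n])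
  have hαμ : (0:ℝ) < α ^ 2 + μ := by positivity
  rcases hcond with h1 | h2 | h3
  · -- case 1
    have hXle : X μ ≤ ∑' n, a n / (γ n + 2 * k₂) := by
      rw [hX μ]
      refine Summable.tsum_le_tsum (fun n => ?_) hsumX hsum1
      rw [div_le_div_iff₀ (by nlinarith [hbpos n]) (hbpos n)]
      nlinarith [mul_nonneg (ha n) hμ.le, hbpos n]
    have hfrac : α ^ 2 / (α ^ 2 + μ) < 1 := by
      rw [div_lt_one hαμ]; linarith
    have : P μ > ρ₀ - 2 * k₁ := by rw [hP μ]; nlinarith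
    linarith [hXP ▸ hXle]
  · -- case 2
    have hXnn : 0 ≤ X μ := by
      rw [hX μ]
      exact tsum_nonneg fun n =>
        div_nonneg (mul_nonneg (ha n) (hbpos n).le) (by nlinarith [hbpos n])
    have hfrac : 0 < α ^ 2 / (α ^ 2 + μ) := by positivity
    have : P μ < 0 := by rw [hP μ]; nlinarith
    linarith [hXP ▸ hXnn]
  · -- case 3
    have hY0le : Y 0 ≤ ∑' n, a n / γ n ^ 2 := by
      rw [hY 0]
      refine Summable.tsum_le_tsum (fun n => ?_) (hsumY 0 le_rfl) hsumγ2
      refine div_le_div_of_nonneg_left (ha n) (pow_pos (hγpos n) 2) ?_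
      nlinarith [hγpos n, hk₂]
    have hYle : Y μ ≤ Y 0 := by
      rw [hY μ, hY 0]
      refine Summable.tsum_le_tsum (fun n => ?_) (hsumY μ hμ.le) (hsumY 0 le_rfl)
      refine div_le_div_of_nonneg_left (ha n) ?_ (by linarith)
      nlinarith [hden 0 le_rfl n, mul_pos (hγpos n) hc]
    have hτY : 0 < τ - Y 0 := by linarith
    have hk : k₁ ≤ α * (τ - Y 0) := (div_le_iff₀ hτY).mp h3
    have hEq : Y μ = τ - k₁ * α / (α ^ 2 + μ) := hYQ.trans (hQ μ)
    have hEq' : k₁ * α = (τ - Y μ) * (α ^ 2 + μ) := by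
      field_simp at hEq ⊢
      nlinarith [hEq]
    nlinarith [mul_le_mul_of_nonneg_left hYle hα.le, mul_pos hk₁ hμ]
end

section
/- Let (γ_n)_{n≥0} be positive reals with inf_n γ_n > 0 and (a_n)_{n≥0} nonnegative reals, not all zero, with Σ_n a_n/γ_n < ∞; define X(0,μ,k₂) := Σ_n a_n(γ_n + 2k₂)/((γ_n + 2k₂)² + μ). Let ρ₀ > 0, 0 < k₁ < ρ₀, and k₂ > 0 with X(0,0,k₂) > ρ₀ − 2k₁. Then for every α > 0 there exists a unique μ₁(α) > 0 satisfying X(0, μ₁(α), k₂) = ρ₀ − k₁(1 + α²/(α² + μ₁(α))), and the function λ₁(α) := √(μ₁(α)) is continuous and strictly increasing on (0, ∞). -/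
open Filter Set

private noncomputable def gfun (ρ₀ k₁ α μ : ℝ) : ℝ := ρ₀ - k₁ * (1 + α ^ 2 / (α ^ 2 + μ))

private lemma gfun_mono {ρ₀ k₁ α μ μ' : ℝ} (hk₁ : 0 < k₁) (hα : 0 < α)
    (hμ : 0 ≤ μ) (hlt : μ < μ') : gfun ρ₀ k₁ α μ < gfun ρ₀ k₁ α μ' := by
  have hA : α ^ 2 / (α ^ 2 + μ') < α ^ 2 / (α ^ 2 + μ) :=
    div_lt_div_of_pos_left (by positivity) (by nlinarith) (by linarith)
  have := mul_lt_mul_of_pos_left hA hk₁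
  unfold gfun; nlinarith

private lemma gfun_anti {ρ₀ k₁ α α' μ : ℝ} (hk₁ : 0 < k₁) (hμ : 0 < μ)
    (hα : 0 < α) (hlt : α < α') : gfun ρ₀ k₁ α' μ < gfun ρ₀ k₁ α μ := by
  have hA : α ^ 2 / (α ^ 2 + μ) < α' ^ 2 / (α' ^ 2 + μ) := by
    rw [div_lt_div_iff₀ (by nlinarith) (by nlinarith)]
    nlinarith [mul_pos hμ (show (0:ℝ) < α' ^ 2 - α ^ 2 by nlinarith)]
  have := mul_lt_mul_of_pos_left hA hk₁
  unfold gfun; nlinarith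

private lemma gfun_zero {ρ₀ k₁ α : ℝ} (hα : 0 < α) :
    gfun ρ₀ k₁ α 0 = ρ₀ - 2 * k₁ := by
  unfold gfun
  rw [add_zero, div_self (by positivity)]
  ring

private lemma gfun_cont_mu {ρ₀ k₁ α : ℝ} (hα : 0 < α) :
    ContinuousOn (fun μ => gfun ρ₀ k₁ α μ) (Set.Ici 0) := by
  unfold gfun
  refine continuousOn_const.sub (continuousOn_const.mul (continuousOn_const.add
    (ContinuousOn.div continuousOn_const (by fun_prop) ?_)))
  intro μ hμ
  have : (0:ℝ) ≤ μ := hμ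
  have : (0:ℝ) < α ^ 2 + μ := by positivity
  exact ne_of_gt this

private lemma gfun_cont_alpha {ρ₀ k₁ μ : ℝ} (hμ : 0 < μ) :
    Continuous (fun α => gfun ρ₀ k₁ α μ) := by
  unfold gfun
  refine continuous_const.sub (continuous_const.mul (continuous_const.add
    (Continuous.div (continuous_pow 2) (by fun_prop) ?_)))
  intro α
  have : (0:ℝ) < α ^ 2 + μ := by positivity
  exact ne_of_gt this

private lemma aux_bound (b a : ℕ → ℝ) (hb : ∀ n, 0 < b n) (ha : ∀ n, 0 ≤ a n)
    (n : ℕ) {μ : ℝ} (hμ : 0 ≤ μ) : a n * b n / (b n ^ 2 + μ) ≤ a n / b n := by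
  have hbn := hb n
  have han := ha n
  rw [div_le_div_iff₀ (by positivity) hbn]
  nlinarith [mul_nonneg han hμ]

private lemma aux_cont (b a : ℕ → ℝ) (hb : ∀ n, 0 < b n) (ha : ∀ n, 0 ≤ a n)
    (hsum : Summable fun n => a n / b n) :
    Continuous fun μ : ℝ => ∑' n, a n * b n / (b n ^ 2 + max μ 0) := by
  refine continuous_tsum (u := fun n => a n / b n) (fun n => ?_) hsum (fun n x => ?_)
  · refine Continuous.div continuous_const (by fun_prop) ?_
    intro x
    have hbn := hb n
    have h1 : (0:ℝ) ≤ max x 0 := le_max_right _ _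
    nlinarith
  · have hbn := hb n
    have han := ha n
    have h1 : (0:ℝ) ≤ max x 0 := le_max_right _ _
    have h2 : (0:ℝ) < b n ^ 2 + max x 0 := by nlinarith
    rw [Real.norm_eq_abs, abs_of_nonneg (div_nonneg (mul_nonneg han hbn.le) h2.le)]
    exact aux_bound b a hb ha n h1

private lemma aux_tendsto (b a : ℕ → ℝ) (hb : ∀ n, 0 < b n) (ha : ∀ n, 0 ≤ a n)
    (hsum : Summable fun n => a n / b n) :
    Tendsto (fun μ : ℝ => ∑' n, a n * b n / (b n ^ 2 + μ)) atTop (nhds 0) := by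
  have h := tendsto_tsum_of_dominated_convergence (𝓕 := atTop)
      (f := fun (μ : ℝ) (n : ℕ) => a n * b n / (b n ^ 2 + μ)) (g := fun _ => 0)
      (bound := fun n => a n / b n) hsum ?_ ?_
  · simpa using h
  · intro k
    exact Filter.Tendsto.div_atTop tendsto_const_nhds
      (tendsto_atTop_add_const_left _ _ tendsto_id)
  · filter_upwards [Filter.eventually_ge_atTop (0:ℝ)] with μ hμ k
    have hbn := hb k
    have h2 : (0:ℝ) < b k ^ 2 + μ := by nlinarith
    rw [Real.norm_eq_abs, abs_of_nonneg (div_nonneg (mul_nonneg (ha k) hbn.le) h2.le)]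
    exact aux_bound b a hb ha k hμ

/-- Existence, uniqueness and monotonicity of the frequency `λ₁(α) = √(μ₁(α))`
determined by the first purely imaginary SLEP-2 equation
`X(0,μ,k₂) = ρ₀ - k₁(1 + α²/(α² + μ))`. -/
theorem stmt_12 (γ a : ℕ → ℝ) (c : ℝ) (hc : 0 < c) (hγ : ∀ n, c ≤ γ n)
    (ha : ∀ n, 0 ≤ a n) (hne : ∃ n, a n ≠ 0)
    (hsum : Summable fun n => a n / γ n)
    (ρ₀ k₁ k₂ : ℝ) (hρ : 0 < ρ₀) (hk₁ : 0 < k₁) (hk₁' : k₁ < ρ₀) (hk₂ : 0 < k₂)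
    (X : ℝ → ℝ)
    (hX : ∀ μ, X μ = ∑' n, a n * (γ n + 2 * k₂) / ((γ n + 2 * k₂) ^ 2 + μ))
    (hX0 : ρ₀ - 2 * k₁ < X 0) :
    ∃ μ₁ : ℝ → ℝ,
      (∀ α : ℝ, 0 < α →
        (0 < μ₁ α ∧ X (μ₁ α) = ρ₀ - k₁ * (1 + α ^ 2 / (α ^ 2 + μ₁ α))) ∧
        ∀ μ : ℝ, 0 < μ → X μ = ρ₀ - k₁ * (1 + α ^ 2 / (α ^ 2 + μ)) → μ = μ₁ α) ∧
      ContinuousOn (fun α => Real.sqrt (μ₁ α)) (Set.Ioi 0) ∧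
      StrictMonoOn (fun α => Real.sqrt (μ₁ α)) (Set.Ioi 0) := by
  classical
  obtain ⟨n₀, hn₀⟩ := hne
  have han₀ : 0 < a n₀ := (ha n₀).lt_of_ne (Ne.symm hn₀)
  set b : ℕ → ℝ := fun n => γ n + 2 * k₂ with hbdef
  have hb : ∀ n, 0 < b n := fun n => by
    have := hγ n; simp only [hbdef]; nlinarith
  have hXf : ∀ μ, X μ = ∑' n, a n * b n / (b n ^ 2 + μ) := fun μ => hX μ
  have hsumb : Summable fun n => a n / b n := by
    refine Summable.of_nonneg_of_le (fun n => div_nonneg (ha n) (hb n).le)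
      (fun n => ?_) hsum
    have h1 := hγ n
    have h2 := hb n
    have hγn : 0 < γ n := lt_of_lt_of_le hc h1
    apply div_le_div_of_nonneg_left (ha n) hγn
    simp only [hbdef]; nlinarith
  have hsummu : ∀ μ : ℝ, 0 ≤ μ → Summable fun n => a n * b n / (b n ^ 2 + μ) := by
    intro μ hμ
    refine Summable.of_nonneg_of_le (fun n => ?_) (fun n => aux_bound b a hb ha n hμ) hsumb
    have hbn := hb n
    have : (0:ℝ) < b n ^ 2 + μ := by nlinarith
    exact div_nonneg (mul_nonneg (ha n) hbn.le) this.le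
  -- X is strictly decreasing on [0,∞)
  have hXanti : StrictAntiOn X (Set.Ici 0) := by
    intro μ hμ μ' hμ' hlt
    have hμ0 : (0:ℝ) ≤ μ := hμ
    have hμ'0 : (0:ℝ) ≤ μ' := hμ'
    rw [hXf μ, hXf μ']
    refine Summable.tsum_lt_tsum_of_nonneg (i := n₀) (fun n => ?_) (fun n => ?_) ?_ (hsummu μ hμ0)
    · have hbn := hb n
      have : (0:ℝ) < b n ^ 2 + μ' := by nlinarith
      exact div_nonneg (mul_nonneg (ha n) hbn.le) this.le
    · have hbn := hb n
      have h1 : (0:ℝ) < b n ^ 2 + μ' := by nlinarith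
      have h2 : (0:ℝ) < b n ^ 2 + μ := by nlinarith
      rw [div_le_div_iff₀ h1 h2]
      nlinarith [mul_nonneg (mul_nonneg (ha n) hbn.le) (by linarith : (0:ℝ) ≤ μ' - μ)]
    · have hbn := hb n₀
      have h1 : (0:ℝ) < b n₀ ^ 2 + μ' := by nlinarith
      have h2 : (0:ℝ) < b n₀ ^ 2 + μ := by nlinarith
      rw [div_lt_div_iff₀ h1 h2]
      nlinarith [mul_pos (mul_pos han₀ hbn) (by linarith : (0:ℝ) < μ' - μ)]
  -- X is continuous on [0,∞)
  have hXcont : ContinuousOn X (Set.Ici 0) := by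
    refine ((aux_cont b a hb ha hsumb).continuousOn).congr ?_
    intro μ hμ
    show X μ = ∑' (n : ℕ), a n * b n / (b n ^ 2 + max μ 0)
    rw [hXf μ, max_eq_left (hμ : (0:ℝ) ≤ μ)]
  -- X tends to 0 at infinity
  have hXtend : Tendsto X atTop (nhds 0) := by
    exact (aux_tendsto b a hb ha hsumb).congr' (Filter.Eventually.of_forall fun μ => (hXf μ).symm)
  -- existence and uniqueness of the root for each α > 0
  have key : ∀ α : ℝ, 0 < α → ∃ μ : ℝ,
      (0 < μ ∧ X μ = gfun ρ₀ k₁ α μ) ∧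
      ∀ μ' : ℝ, 0 < μ' → X μ' = gfun ρ₀ k₁ α μ' → μ' = μ := by
    intro α hα
    have hgt : Tendsto (fun μ => gfun ρ₀ k₁ α μ) atTop (nhds (ρ₀ - k₁)) := by
      have h1 : Tendsto (fun μ : ℝ => α ^ 2 / (α ^ 2 + μ)) atTop (nhds 0) :=
        Filter.Tendsto.div_atTop tendsto_const_nhds
          (tendsto_atTop_add_const_left _ _ tendsto_id)
      have h2 : Tendsto (fun μ : ℝ => ρ₀ - k₁ * (1 + α ^ 2 / (α ^ 2 + μ))) atTop
          (nhds (ρ₀ - k₁ * (1 + 0))) :=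
        tendsto_const_nhds.sub (tendsto_const_nhds.mul (tendsto_const_nhds.add h1))
      simpa [gfun] using h2
    have hev : ∀ᶠ M : ℝ in atTop,
        X M < (ρ₀ - k₁) / 2 ∧ (ρ₀ - k₁) / 2 < gfun ρ₀ k₁ α M ∧ (0:ℝ) ≤ M := by
      filter_upwards [hXtend.eventually_lt_const (by linarith : (0:ℝ) < (ρ₀ - k₁) / 2),
        hgt.eventually_const_lt (by linarith : (ρ₀ - k₁) / 2 < ρ₀ - k₁),
        Filter.eventually_ge_atTop (0:ℝ)] with M h1 h2 h3
      exact ⟨h1, h2, h3⟩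
    obtain ⟨M, hM1, hM2, hM0⟩ := hev.exists
    have hhM : X M - gfun ρ₀ k₁ α M < 0 := by linarith
    have hh0 : 0 < X 0 - gfun ρ₀ k₁ α 0 := by
      rw [gfun_zero hα]; linarith
    have hcont : ContinuousOn (fun μ => X μ - gfun ρ₀ k₁ α μ) (Set.Icc 0 M) :=
      (hXcont.mono Set.Icc_subset_Ici_self).sub
        ((gfun_cont_mu hα).mono Set.Icc_subset_Ici_self)
    have hmem : (0:ℝ) ∈ Set.Icc (X M - gfun ρ₀ k₁ α M) (X 0 - gfun ρ₀ k₁ α 0) :=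
      ⟨hhM.le, hh0.le⟩
    obtain ⟨μ, hμmem, hμeq⟩ := intermediate_value_Icc' hM0 hcont hmem
    have hμeq' : X μ = gfun ρ₀ k₁ α μ := by
      have : X μ - gfun ρ₀ k₁ α μ = 0 := hμeq
      linarith
    have hμpos : 0 < μ := by
      rcases eq_or_lt_of_le hμmem.1 with h | h
      · exfalso; rw [← h] at hμeq'; linarith [hμeq']
      · exact h
    refine ⟨μ, ⟨hμpos, hμeq'⟩, ?_⟩
    intro μ' hμ' heq'
    by_contra hne'
    rcases lt_or_gt_of_ne hne' with hlt | hlt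
    · have h1 := hXanti (le_of_lt hμ' : μ' ∈ Set.Ici 0) (hμpos.le : μ ∈ Set.Ici 0) hlt
      have h2 := gfun_mono (ρ₀ := ρ₀) hk₁ hα hμ'.le hlt
      linarith
    · have h1 := hXanti (hμpos.le : μ ∈ Set.Ici 0) (le_of_lt hμ' : μ' ∈ Set.Ici 0) hlt
      have h2 := gfun_mono (ρ₀ := ρ₀) hk₁ hα hμpos.le hlt
      linarith
  -- define the root function
  set μf : ℝ → ℝ := fun α => if hα : 0 < α then (key α hα).choose else 0 with hμfdef
  have hμspec : ∀ α : ℝ, ∀ hα : 0 < α,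
      (0 < μf α ∧ X (μf α) = gfun ρ₀ k₁ α (μf α)) ∧
      ∀ μ' : ℝ, 0 < μ' → X μ' = gfun ρ₀ k₁ α μ' → μ' = μf α := by
    intro α hα
    simp only [hμfdef, dif_pos hα]
    exact (key α hα).choose_spec
  -- strict monotonicity of μf
  have hmono : StrictMonoOn μf (Set.Ioi 0) := by
    intro α hα α' hα' hlt
    have hα : (0:ℝ) < α := hα
    have hα' : (0:ℝ) < α' := hα'
    obtain ⟨⟨hp, hep⟩, _⟩ := hμspec α hα
    obtain ⟨⟨hp', hep'⟩, _⟩ := hμspec α' hα'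
    by_contra hnot
    push_neg at hnot
    have hanti := gfun_anti (ρ₀ := ρ₀) (μ := μf α) hk₁ hp hα hlt
    rcases eq_or_lt_of_le hnot with h | h
    · rw [h] at hep'
      linarith
    · have h1 := hXanti (hp'.le : μf α' ∈ Set.Ici 0) (hp.le : μf α ∈ Set.Ici 0) h
      have h2 := gfun_mono (ρ₀ := ρ₀) (α := α') hk₁ hα' hp'.le h
      linarith
  -- continuity of μf on (0,∞)
  have hμcont : ContinuousOn μf (Set.Ioi 0) := by
    rw [Metric.continuousOn_iff]
    intro α₀ hα₀ ε hε
    have hα₀ : (0:ℝ) < α₀ := hα₀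
    obtain ⟨⟨hp₀, he₀⟩, _⟩ := hμspec α₀ hα₀
    set ε' : ℝ := min (ε / 2) (μf α₀ / 2) with hε'def
    have hε' : 0 < ε' := lt_min (by linarith) (by linarith)
    have hε'le : ε' ≤ ε / 2 := min_le_left _ _
    have hε'le2 : ε' ≤ μf α₀ / 2 := min_le_right _ _
    set p : ℝ := μf α₀ - ε' with hpdef
    set q : ℝ := μf α₀ + ε' with hqdef
    have hppos : 0 < p := by simp only [hpdef]; linarith
    have hqpos : 0 < q := by simp only [hqdef]; linarith
    have hpq : p < μf α₀ := by simp only [hpdef]; linarith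
    have hq' : μf α₀ < q := by simp only [hqdef]; linarith
    have h1 : gfun ρ₀ k₁ α₀ p < X p := by
      have hx := hXanti (hppos.le : p ∈ Set.Ici 0) (hp₀.le : μf α₀ ∈ Set.Ici 0) hpq
      have hg := gfun_mono (ρ₀ := ρ₀) (α := α₀) hk₁ hα₀ hppos.le hpq
      linarith
    have h2 : X q < gfun ρ₀ k₁ α₀ q := by
      have hx := hXanti (hp₀.le : μf α₀ ∈ Set.Ici 0) (hqpos.le : q ∈ Set.Ici 0) hq'
      have hg := gfun_mono (ρ₀ := ρ₀) (α := α₀) hk₁ hα₀ hp₀.le hq'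
      linarith
    have hcg1 : Tendsto (fun α => gfun ρ₀ k₁ α p) (nhds α₀) (nhds (gfun ρ₀ k₁ α₀ p)) :=
      (gfun_cont_alpha (ρ₀ := ρ₀) (k₁ := k₁) hppos).tendsto α₀
    have hcg2 : Tendsto (fun α => gfun ρ₀ k₁ α q) (nhds α₀) (nhds (gfun ρ₀ k₁ α₀ q)) :=
      (gfun_cont_alpha (ρ₀ := ρ₀) (k₁ := k₁) hqpos).tendsto α₀
    have hev : ∀ᶠ α in nhds α₀, gfun ρ₀ k₁ α p < X p ∧ X q < gfun ρ₀ k₁ α q := by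
      filter_upwards [hcg1.eventually_lt_const h1, hcg2.eventually_const_lt h2]
        with α ha1 ha2
      exact ⟨ha1, ha2⟩
    obtain ⟨δ, hδ, hball⟩ := Metric.eventually_nhds_iff.mp hev
    refine ⟨δ, hδ, ?_⟩
    intro α hαmem hαdist
    have hα : (0:ℝ) < α := hαmem
    obtain ⟨hgp, hgq⟩ := hball hαdist
    obtain ⟨⟨hp, he⟩, _⟩ := hμspec α hα
    -- p < μf α
    have hlow : p < μf α := by
      by_contra hnot
      push_neg at hnot
      rcases eq_or_lt_of_le hnot with h | h
      · rw [h] at he; linarith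
      · have hx := hXanti (hp.le : μf α ∈ Set.Ici 0) (hppos.le : p ∈ Set.Ici 0) h
        have hg := gfun_mono (ρ₀ := ρ₀) (α := α) hk₁ hα hp.le h
        linarith
    have hhigh : μf α < q := by
      by_contra hnot
      push_neg at hnot
      rcases eq_or_lt_of_le hnot with h | h
      · rw [← h] at he; linarith
      · have hx := hXanti (hqpos.le : q ∈ Set.Ici 0) (hp.le : μf α ∈ Set.Ici 0) h
        have hg := gfun_mono (ρ₀ := ρ₀) (α := α) hk₁ hα hqpos.le h
        linarith
    rw [Real.dist_eq, abs_lt]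
    constructor
    · simp only [hpdef] at hlow; linarith
    · simp only [hqdef] at hhigh; linarith
  refine ⟨μf, ?_, ?_, ?_⟩
  · intro α hα
    obtain ⟨⟨hp, he⟩, hu⟩ := hμspec α hα
    exact ⟨⟨hp, he⟩, hu⟩
  · exact Real.continuous_sqrt.comp_continuousOn hμcont
  · intro α hα α' hα' hlt
    have hα : (0:ℝ) < α := hα
    obtain ⟨⟨hp, _⟩, _⟩ := hμspec α hα
    exact Real.sqrt_lt_sqrt hp.le (hmono (by exact hα) hα' hlt)
end

section
/- Let (γ_n)_{n≥0} be positive reals with inf_n γ_n > 0 and (a_n)_{n≥0} nonnegative reals, not all zero, with Σ_n a_n/γ_n < ∞; define Y(0,μ,k₂) := Σ_n a_n/((γ_n + 2k₂)² + μ). Let k₁ > 0, k₂ > 0 and τ > Σ_n a_n/γ_n², and set α₀ := k₁/(τ − Y(0,0,k₂)) > 0. Then for every α ∈ (0,α₀) there exists a unique μ₂(α) > 0 satisfying Y(0, μ₂(α), k₂) = τ − k₁α/(α² + μ₂(α)). Writing λ₂(α) := √(μ₂(α)): λ₂(α) → 0 as α → 0⁺ and as α → α₀⁻; there exists a unique α₂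 ∈ (0,α₀) such that λ₂ is strictly increasing on (0,α₂) and strictly decreasing on (α₂,α₀), attaining its maximum at α₂; and λ₂(α) > α for α ∈ (0,α₂), λ₂(α₂) = α₂, λ₂(α) < α for α ∈ (α₂,α₀). -/
/-- Auxiliary polynomial form of the SLEP-2 equation. -/
private def auxP (τ k₁ : ℝ) (Y : ℝ → ℝ) (α μ : ℝ) : ℝ :=
  (τ - Y μ) * (α ^ 2 + μ) - k₁ * α

set_option maxHeartbeats 1000000 in
/-- Existence and shape of the frequency `λ₂(α) = √(μ₂(α))` determined by the second
purely imaginary SLEP-2 equation `Y(0,μ,k₂) = τ - k₁α/(α² + μ)` on `(0, α₀)`, where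
`α₀ = k₁/(τ - Y(0,0,k₂))`: it vanishes at both endpoints, has a unique interior point
`α₂` of maximal value separating the increasing and decreasing branches, and satisfies
`λ₂(α) > α` on `(0,α₂)`, `λ₂(α₂) = α₂`, `λ₂(α) < α` on `(α₂,α₀)`. -/
theorem stmt_14 (γ a : ℕ → ℝ) (c : ℝ) (hc : 0 < c) (hγ : ∀ n, c ≤ γ n)
    (ha : ∀ n, 0 ≤ a n) (hne : ∃ n, a n ≠ 0)
    (hsum : Summable fun n => a n / γ n)
    (k₁ k₂ τ : ℝ) (hk₁ : 0 < k₁) (hk₂ : 0 < k₂)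
    (hτ : (∑' n, a n / (γ n) ^ 2) < τ)
    (Y : ℝ → ℝ) (hY : ∀ μ, Y μ = ∑' n, a n / ((γ n + 2 * k₂) ^ 2 + μ))
    (α₀ : ℝ) (hα₀ : α₀ = k₁ / (τ - Y 0)) :
    0 < α₀ ∧
    ∃ μ₂ : ℝ → ℝ,
      (∀ α ∈ Set.Ioo 0 α₀,
        (0 < μ₂ α ∧ Y (μ₂ α) = τ - k₁ * α / (α ^ 2 + μ₂ α)) ∧
        ∀ μ : ℝ, 0 < μ → Y μ = τ - k₁ * α / (α ^ 2 + μ) → μ = μ₂ α) ∧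
      Filter.Tendsto (fun α => Real.sqrt (μ₂ α)) (nhdsWithin 0 (Set.Ioi 0)) (nhds 0) ∧
      Filter.Tendsto (fun α => Real.sqrt (μ₂ α)) (nhdsWithin α₀ (Set.Iio α₀)) (nhds 0) ∧
      (∃! α₂ : ℝ, α₂ ∈ Set.Ioo 0 α₀ ∧
        StrictMonoOn (fun α => Real.sqrt (μ₂ α)) (Set.Ioo 0 α₂) ∧
        StrictAntiOn (fun α => Real.sqrt (μ₂ α)) (Set.Ioo α₂ α₀)) ∧
      (∀ α₂ : ℝ, (α₂ ∈ Set.Ioo 0 α₀ ∧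
          StrictMonoOn (fun α => Real.sqrt (μ₂ α)) (Set.Ioo 0 α₂) ∧
          StrictAntiOn (fun α => Real.sqrt (μ₂ α)) (Set.Ioo α₂ α₀)) →
        (∀ α ∈ Set.Ioo 0 α₀, Real.sqrt (μ₂ α) ≤ Real.sqrt (μ₂ α₂)) ∧
        (∀ α ∈ Set.Ioo 0 α₂, α < Real.sqrt (μ₂ α)) ∧
        Real.sqrt (μ₂ α₂) = α₂ ∧
        (∀ α ∈ Set.Ioo α₂ α₀, Real.sqrt (μ₂ α) < α)) := by
  classical
  have hγpos : ∀ n, 0 < γ n := fun n => lt_of_lt_of_le hc (hγ n)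
  have hbpos : ∀ n, 0 < (γ n + 2 * k₂) ^ 2 := fun n => by
    have := hγpos n; positivity
  have hbge : ∀ n, γ n ^ 2 ≤ (γ n + 2 * k₂) ^ 2 := fun n => by
    have := hγpos n; nlinarith
  have hsum2 : Summable fun n => a n / γ n ^ 2 := by
    refine Summable.of_nonneg_of_le (fun n => div_nonneg (ha n) (sq_nonneg _))
      (fun n => ?_) (hsum.mul_left (1 / c))
    have h1 := hγpos n
    have h2 : (1 : ℝ) / c * (a n / γ n) = a n / (c * γ n) := by
      rw [div_mul_div_comm, one_mul]
    rw [h2]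
    apply div_le_div_of_nonneg_left (ha n) (mul_pos hc h1)
    nlinarith [hγ n]
  have hS : ∀ μ : ℝ, 0 ≤ μ → Summable fun n => a n / ((γ n + 2 * k₂) ^ 2 + μ) := by
    intro μ hμ
    refine Summable.of_nonneg_of_le
      (fun n => div_nonneg (ha n) (by have := hbpos n; linarith))
      (fun n => ?_) hsum2
    apply div_le_div_of_nonneg_left (ha n) (pow_pos (hγpos n) 2)
    have := hbge n; linarith
  have hYle : ∀ μ μ' : ℝ, 0 ≤ μ → μ ≤ μ' → Y μ' ≤ Y μ := by
    intro μ μ' h0 h1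
    rw [hY μ, hY μ']
    refine Summable.tsum_le_tsum (fun n => ?_) (hS μ' (h0.trans h1)) (hS μ h0)
    apply div_le_div_of_nonneg_left (ha n) (by have := hbpos n; linarith)
    linarith
  have hY0le : Y 0 ≤ ∑' n, a n / γ n ^ 2 := by
    rw [hY 0]
    refine Summable.tsum_le_tsum (fun n => ?_) (hS 0 le_rfl) hsum2
    apply div_le_div_of_nonneg_left (ha n) (pow_pos (hγpos n) 2)
    have := hbge n; linarith
  have hg : 0 < τ - Y 0 := by linarith
  have hτY : ∀ μ : ℝ, 0 ≤ μ → 0 < τ - Y μ := fun μ hμ => by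
    have := hYle 0 μ le_rfl hμ; linarith
  have hgle : ∀ μ : ℝ, 0 ≤ μ → τ - Y 0 ≤ τ - Y μ := fun μ hμ => by
    have := hYle 0 μ le_rfl hμ; linarith
  have hα₀pos : 0 < α₀ := by rw [hα₀]; exact div_pos hk₁ hg
  have hα₀g : (τ - Y 0) * α₀ = k₁ := by
    rw [hα₀]; field_simp
  -- continuity of Y on [0, ∞)
  have hYcont : ContinuousOn Y (Set.Ici 0) := by
    have h1 : ContinuousOn (fun μ : ℝ => ∑' n, a n / ((γ n + 2 * k₂) ^ 2 + μ))
        (Set.Ici 0) := by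
      refine continuousOn_tsum (f := fun n μ => a n / ((γ n + 2 * k₂) ^ 2 + μ))
        (u := fun n => a n / γ n ^ 2) (fun n => ?_) hsum2 (fun n μ hμ => ?_)
      · refine ContinuousOn.div continuousOn_const
          (continuousOn_const.add continuousOn_id) (fun μ hμ => ?_)
        have h2 := hbpos n
        have hμ' : (0:ℝ) ≤ μ := hμ
        exact ne_of_gt (by linarith)
      · have hμ' : (0:ℝ) ≤ μ := hμ
        have hb := hbpos n
        rw [Real.norm_eq_abs, abs_of_nonneg (div_nonneg (ha n) (by linarith))]
        apply div_le_div_of_nonneg_left (ha n) (pow_pos (hγpos n) 2)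
        have := hbge n; linarith
    exact h1.congr fun μ hμ => hY μ
  -- strict monotonicity of auxP in μ
  have hPm : ∀ α : ℝ, 0 < α → ∀ μ μ' : ℝ, 0 ≤ μ → μ < μ' →
      auxP τ k₁ Y α μ < auxP τ k₁ Y α μ' := by
    intro α hα μ μ' h0 h1
    have hY1 : Y μ' ≤ Y μ := hYle μ μ' h0 h1.le
    have hY2 : 0 < τ - Y μ := hτY μ h0
    have hμ'nn : (0:ℝ) ≤ α ^ 2 + μ' := by nlinarith [sq_nonneg α]
    unfold auxP
    nlinarith [mul_nonneg (sub_nonneg.2 hY1) hμ'nn, mul_pos hY2 (sub_pos.2 h1)]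
  -- continuity of auxP α on Icc
  have hPcont : ∀ α N : ℝ, 0 ≤ N → ContinuousOn (auxP τ k₁ Y α) (Set.Icc 0 N) := by
    intro α N hN
    unfold auxP
    refine ContinuousOn.sub (ContinuousOn.mul ?_ ?_) continuousOn_const
    · exact continuousOn_const.sub (hYcont.mono Set.Icc_subset_Ici_self)
    · exact continuousOn_const.add continuousOn_id
  -- existence of the root μ₂(α)
  have hex : ∀ α : ℝ, α ∈ Set.Ioo 0 α₀ → ∃ μ : ℝ, 0 < μ ∧ auxP τ k₁ Y α μ = 0 := by
    intro α hα
    obtain ⟨hα1, hα2⟩ := hα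
    set N : ℝ := k₁ * α / (τ - Y 0) + 1 with hN
    have hNpos : 0 < N := by
      have : 0 < k₁ * α / (τ - Y 0) := div_pos (mul_pos hk₁ hα1) hg
      rw [hN]; linarith
    have hN0 : 0 ≤ N := hNpos.le
    have hgN : (τ - Y 0) * N = k₁ * α + (τ - Y 0) := by
      rw [hN, mul_add, mul_one, mul_div_cancel₀ _ hg.ne']
    have hneg : auxP τ k₁ Y α 0 < 0 := by
      have hgα : (τ - Y 0) * α < k₁ := by
        rw [hα₀] at hα2
        have := (lt_div_iff₀ hg).1 hα2
        linarith
      unfold auxP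
      nlinarith [mul_lt_mul_of_pos_right hgα hα1]
    have hposN : 0 < auxP τ k₁ Y α N := by
      have h1 : τ - Y 0 ≤ τ - Y N := hgle N hN0
      have h2 : (τ - Y 0) * N ≤ (τ - Y N) * (α ^ 2 + N) := by
        nlinarith [mul_nonneg (sub_nonneg.2 h1) hN0,
          mul_nonneg (by linarith : (0:ℝ) ≤ τ - Y N) (sq_nonneg α)]
      unfold auxP
      linarith
    have hivt := intermediate_value_Icc hN0 (hPcont α N hN0)
    have h0mem : (0 : ℝ) ∈ Set.Icc (auxP τ k₁ Y α 0) (auxP τ k₁ Y α N) :=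
      ⟨hneg.le, hposN.le⟩
    obtain ⟨μ, hμmem, hμroot⟩ := hivt h0mem
    refine ⟨μ, lt_of_le_of_ne hμmem.1 (fun h => ?_), hμroot⟩
    rw [← h] at hμroot
    linarith [hneg, hμroot.ge, hμroot.le]
  choose! μ₂ hpos hrt using hex
  -- sign characterization
  have hlt : ∀ α : ℝ, α ∈ Set.Ioo 0 α₀ → ∀ μ : ℝ, 0 ≤ μ →
      (auxP τ k₁ Y α μ < 0 ↔ μ < μ₂ α) := by
    intro α hα μ hμ
    constructor
    · intro h
      rcases lt_trichotomy μ (μ₂ α) with h1 | h1 | h1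
      · exact h1
      · rw [h1, hrt α hα] at h; linarith
      · have := hPm α hα.1 (μ₂ α) μ (hpos α hα).le h1
        rw [hrt α hα] at this; linarith
    · intro h
      have := hPm α hα.1 μ (μ₂ α) hμ h
      rw [hrt α hα] at this; linarith
  have hgt : ∀ α : ℝ, α ∈ Set.Ioo 0 α₀ → ∀ μ : ℝ, 0 ≤ μ →
      (0 < auxP τ k₁ Y α μ ↔ μ₂ α < μ) := by
    intro α hα μ hμ
    constructor
    · intro h
      rcases lt_trichotomy (μ₂ α) μ with h1 | h1 | h1
      · exact h1
      · rw [← h1, hrt α hα] at h; linarith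
      · have := hPm α hα.1 μ (μ₂ α) hμ h1
        rw [hrt α hα] at this; linarith
    · intro h
      have := hPm α hα.1 (μ₂ α) μ (hpos α hα).le h
      rw [hrt α hα] at this; linarith
  have huniqroot : ∀ α : ℝ, α ∈ Set.Ioo 0 α₀ → ∀ μ : ℝ, 0 ≤ μ →
      auxP τ k₁ Y α μ = 0 → μ = μ₂ α := by
    intro α hα μ hμ h
    rcases lt_trichotomy μ (μ₂ α) with h1 | h1 | h1
    · rw [← hlt α hα μ hμ] at h1; linarith
    · exact h1
    · rw [← hgt α hα μ hμ] at h1; linarith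
  -- equivalence with the Y-equation
  have hiff : ∀ α μ : ℝ, 0 < μ →
      ((Y μ = τ - k₁ * α / (α ^ 2 + μ)) ↔ auxP τ k₁ Y α μ = 0) := by
    intro α μ hμ
    have h1' : 0 < α ^ 2 + μ := by nlinarith [sq_nonneg α]
    have h1 : α ^ 2 + μ ≠ 0 := h1'.ne'
    unfold auxP
    constructor
    · intro h
      have h2 : k₁ * α / (α ^ 2 + μ) = τ - Y μ := by linarith
      have h3 := (div_eq_iff h1).1 h2
      linarith
    · intro h
      have h3 : (τ - Y μ) * (α ^ 2 + μ) = k₁ * α := by linarith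
      have h2 : k₁ * α / (α ^ 2 + μ) = τ - Y μ := by
        rw [div_eq_iff h1]; linarith
      linarith
  -- the critical point m (= μ*) and s = √m (= α₂)
  have hm : ∃ m : ℝ, 0 < m ∧ 2 * (τ - Y m) * Real.sqrt m = k₁ := by
    have hN0 : (0:ℝ) ≤ (k₁ / (τ - Y 0)) ^ 2 := sq_nonneg _
    have hH : ContinuousOn (fun μ => 2 * (τ - Y μ) * Real.sqrt μ - k₁)
        (Set.Icc 0 ((k₁ / (τ - Y 0)) ^ 2)) := by
      refine ContinuousOn.sub (ContinuousOn.mul ?_ ?_) continuousOn_const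
      · exact continuousOn_const.mul
          (continuousOn_const.sub (hYcont.mono Set.Icc_subset_Ici_self))
      · exact Real.continuous_sqrt.continuousOn
    have hsqN : Real.sqrt ((k₁ / (τ - Y 0)) ^ 2) = k₁ / (τ - Y 0) :=
      Real.sqrt_sq (le_of_lt (div_pos hk₁ hg))
    have h2 : τ - Y 0 ≤ τ - Y ((k₁ / (τ - Y 0)) ^ 2) := hgle _ hN0
    have h3 : (τ - Y 0) * (k₁ / (τ - Y 0)) = k₁ := by
      field_simp
    have hHN : (0:ℝ) < 2 * (τ - Y ((k₁ / (τ - Y 0)) ^ 2)) *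
        Real.sqrt ((k₁ / (τ - Y 0)) ^ 2) - k₁ := by
      rw [hsqN]
      nlinarith [div_pos hk₁ hg]
    have hH0 : 2 * (τ - Y 0) * Real.sqrt 0 - k₁ = -k₁ := by simp
    have h0mem : (0 : ℝ) ∈ Set.Icc
        ((fun μ => 2 * (τ - Y μ) * Real.sqrt μ - k₁) 0)
        ((fun μ => 2 * (τ - Y μ) * Real.sqrt μ - k₁) ((k₁ / (τ - Y 0)) ^ 2)) := by
      constructor
      · show 2 * (τ - Y 0) * Real.sqrt 0 - k₁ ≤ 0
        rw [hH0]; linarith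
      · exact hHN.le
    obtain ⟨m, hmmem, hmroot⟩ := intermediate_value_Icc hN0 hH h0mem
    have hmr : 2 * (τ - Y m) * Real.sqrt m - k₁ = 0 := hmroot
    refine ⟨m, lt_of_le_of_ne hmmem.1 (fun h => ?_), by linarith⟩
    rw [← h] at hmr
    rw [Real.sqrt_zero, mul_zero, zero_sub, neg_eq_zero] at hmr
    exact hk₁.ne' hmr
  obtain ⟨m, hm0, hmkey⟩ := hm
  set s : ℝ := Real.sqrt m with hs
  have hs0 : 0 < s := Real.sqrt_pos.2 hm0
  have hs2 : s ^ 2 = m := Real.sq_sqrt hm0.le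
  have hGm : 0 < τ - Y m := hτY m hm0.le
  -- s is a root at level m : auxP s m = 0
  have hProots : auxP τ k₁ Y s m = 0 := by
    unfold auxP
    linear_combination (-(τ - Y m)) * hs2 + s * hmkey
  -- s < α₀
  have hsα₀ : s < α₀ := by
    have h1 : auxP τ k₁ Y s 0 < auxP τ k₁ Y s m := hPm s hs0 0 m le_rfl hm0
    rw [hProots] at h1
    unfold auxP at h1
    have h2 : (τ - Y 0) * s < k₁ := by nlinarith
    rw [hα₀, lt_div_iff₀ hg]
    nlinarith
  have hsmem : s ∈ Set.Ioo 0 α₀ := ⟨hs0, hsα₀⟩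
  have hμ₂s : μ₂ s = m := (huniqroot s hsmem m hm0.le hProots).symm
  -- μ₂ α ≤ m for all α
  have hle_m : ∀ α : ℝ, α ∈ Set.Ioo 0 α₀ → μ₂ α ≤ m := by
    intro α hα
    by_contra h
    push_neg at h
    have h1 : auxP τ k₁ Y α m < 0 := (hlt α hα m hm0.le).2 h
    unfold auxP at h1
    have e : (τ - Y m) * (α ^ 2 + m) - k₁ * α = (τ - Y m) * (α - s) ^ 2 := by
      linear_combination (-(τ - Y m)) * hs2 + α * hmkey
    nlinarith [mul_nonneg hGm.le (sq_nonneg (α - s))]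
  -- branch facts
  have hB1 : ∀ α : ℝ, α ∈ Set.Ioo 0 α₀ → α < s → α ^ 2 < μ₂ α := by
    intro α hα hαs
    by_contra h
    push_neg at h
    have hroot := hrt α hα
    unfold auxP at hroot
    have hμα := hpos α hα
    have hμm := hle_m α hα
    have hGα : 0 < τ - Y (μ₂ α) := hτY (μ₂ α) hμα.le
    have hGle : τ - Y (μ₂ α) ≤ τ - Y m := by
      have := hYle (μ₂ α) m hμα.le hμm; linarith
    have e1 : k₁ * α ≤ (τ - Y (μ₂ α)) * (2 * α ^ 2) := by
      nlinarith [mul_le_mul_of_nonneg_left h hGα.le]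
    have e3 : 2 * (τ - Y (μ₂ α)) * s ≤ k₁ := by
      nlinarith [mul_le_mul_of_nonneg_right hGle hs0.le]
    nlinarith [mul_le_mul_of_nonneg_right e1 hs0.le,
      mul_le_mul_of_nonneg_right e3 (sq_nonneg α),
      mul_pos (mul_pos hk₁ hα.1) (sub_pos.2 hαs)]
  have hB2 : ∀ α : ℝ, α ∈ Set.Ioo 0 α₀ → s < α → μ₂ α < α ^ 2 := by
    intro α hα hsα
    have h1 := hle_m α hα
    nlinarith [hs2]
  -- strict monotonicity of μ₂ on (0, s)
  have hinc : ∀ x y : ℝ, x ∈ Set.Ioo 0 s → y ∈ Set.Ioo 0 s → x < y → μ₂ x < μ₂ y := by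
    intro x y hx hy hxy
    have hxm : x ∈ Set.Ioo 0 α₀ := ⟨hx.1, hx.2.trans hsα₀⟩
    have hym : y ∈ Set.Ioo 0 α₀ := ⟨hy.1, hy.2.trans hsα₀⟩
    have hμy := hpos y hym
    have hrooty := hrt y hym
    unfold auxP at hrooty
    have hGb : 0 < τ - Y (μ₂ y) := hτY (μ₂ y) hμy.le
    have hy2 : y ^ 2 < μ₂ y := hB1 y hym hy.2
    have key : y * ((τ - Y (μ₂ y)) * (x ^ 2 + μ₂ y) - k₁ * x) =
        (τ - Y (μ₂ y)) * ((y - x) * (μ₂ y - x * y)) := by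
      linear_combination x * hrooty
    have hfac : 0 < (τ - Y (μ₂ y)) * ((y - x) * (μ₂ y - x * y)) := by
      apply mul_pos hGb
      apply mul_pos (by linarith)
      nlinarith [hy2, mul_lt_mul_of_pos_right hxy hy.1]
    have h6 : 0 < y * ((τ - Y (μ₂ y)) * (x ^ 2 + μ₂ y) - k₁ * x) := by
      rw [key]; exact hfac
    have hPxy : 0 < auxP τ k₁ Y x (μ₂ y) := by
      unfold auxP
      nlinarith [hy.1, h6]
    exact (hgt x hxm (μ₂ y) hμy.le).1 hPxy
  -- strict antitonicity of μ₂ on (s, α₀)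
  have hdec : ∀ x y : ℝ, x ∈ Set.Ioo s α₀ → y ∈ Set.Ioo s α₀ → x < y → μ₂ y < μ₂ x := by
    intro x y hx hy hxy
    have hxm : x ∈ Set.Ioo 0 α₀ := ⟨hs0.trans hx.1, hx.2⟩
    have hym : y ∈ Set.Ioo 0 α₀ := ⟨hs0.trans hy.1, hy.2⟩
    have hμx := hpos x hxm
    have hrootx := hrt x hxm
    unfold auxP at hrootx
    have hGa : 0 < τ - Y (μ₂ x) := hτY (μ₂ x) hμx.le
    have hx2 : μ₂ x < x ^ 2 := hB2 x hxm hx.1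
    have key : x * ((τ - Y (μ₂ x)) * (y ^ 2 + μ₂ x) - k₁ * y) =
        (τ - Y (μ₂ x)) * ((y - x) * (x * y - μ₂ x)) := by
      linear_combination y * hrootx
    have hfac : 0 < (τ - Y (μ₂ x)) * ((y - x) * (x * y - μ₂ x)) := by
      apply mul_pos hGa
      apply mul_pos (by linarith)
      nlinarith [hx2, mul_lt_mul_of_pos_left hxy hxm.1]
    have h6 : 0 < x * ((τ - Y (μ₂ x)) * (y ^ 2 + μ₂ x) - k₁ * y) := by
      rw [key]; exact hfac
    have hPyx : 0 < auxP τ k₁ Y y (μ₂ x) := by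
      unfold auxP
      nlinarith [hxm.1, h6]
    exact (hgt y hym (μ₂ x) hμx.le).1 hPyx
  -- the λ-function
  have hSM : StrictMonoOn (fun α => Real.sqrt (μ₂ α)) (Set.Ioo 0 s) := by
    intro x hx y hy hxy
    have hxm : x ∈ Set.Ioo 0 α₀ := ⟨hx.1, hx.2.trans hsα₀⟩
    exact Real.sqrt_lt_sqrt (hpos x hxm).le (hinc x y hx hy hxy)
  have hSA : StrictAntiOn (fun α => Real.sqrt (μ₂ α)) (Set.Ioo s α₀) := by
    intro x hx y hy hxy
    have hym : y ∈ Set.Ioo 0 α₀ := ⟨hs0.trans hy.1, hy.2⟩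
    exact Real.sqrt_lt_sqrt (hpos y hym).le (hdec x y hx hy hxy)
  -- uniqueness of the turning point
  have huniq : ∀ t : ℝ, (t ∈ Set.Ioo 0 α₀ ∧
      StrictMonoOn (fun α => Real.sqrt (μ₂ α)) (Set.Ioo 0 t) ∧
      StrictAntiOn (fun α => Real.sqrt (μ₂ α)) (Set.Ioo t α₀)) → t = s := by
    intro t ht
    obtain ⟨htm, htSM, htSA⟩ := ht
    by_contra hts
    rcases lt_or_gt_of_ne hts with h | h
    · -- t < s : pick x < y in (t, s)
      set x : ℝ := (2 * t + s) / 3 with hx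
      set y : ℝ := (t + 2 * s) / 3 with hy
      have ht0 : 0 < t := htm.1
      have hx1 : t < x := by rw [hx]; linarith
      have hy1 : y < s := by rw [hy]; linarith
      have hxy : x < y := by rw [hx, hy]; linarith
      have hx0 : 0 < x := by rw [hx]; linarith
      have hy0 : 0 < y := by rw [hy]; linarith
      have hxs : x < s := by rw [hx]; linarith
      have hxIoo : x ∈ Set.Ioo 0 s := ⟨hx0, hxs⟩
      have hyIoo : y ∈ Set.Ioo 0 s := ⟨hy0, hy1⟩
      have h1 : Real.sqrt (μ₂ x) < Real.sqrt (μ₂ y) := hSM hxIoo hyIoo hxy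
      have hxI2 : x ∈ Set.Ioo t α₀ := ⟨hx1, hxs.trans hsα₀⟩
      have hyI2 : y ∈ Set.Ioo t α₀ := ⟨by linarith, hy1.trans hsα₀⟩
      have h2 : Real.sqrt (μ₂ y) < Real.sqrt (μ₂ x) := htSA hxI2 hyI2 hxy
      linarith
    · -- s < t : pick x < y in (s, t)
      set x : ℝ := (2 * s + t) / 3 with hx
      set y : ℝ := (s + 2 * t) / 3 with hy
      have htα₀ : t < α₀ := htm.2
      have hx1 : s < x := by rw [hx]; linarith
      have hy1 : y < t := by rw [hy]; linarith
      have hxy : x < y := by rw [hx, hy]; linarith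
      have hxt : x < t := by rw [hx]; linarith
      have hxIoo : x ∈ Set.Ioo s α₀ := ⟨hx1, by linarith⟩
      have hyIoo : y ∈ Set.Ioo s α₀ := ⟨by linarith, by linarith⟩
      have h1 : Real.sqrt (μ₂ y) < Real.sqrt (μ₂ x) := hSA hxIoo hyIoo hxy
      have hxI2 : x ∈ Set.Ioo 0 t := ⟨by linarith, hxt⟩
      have hyI2 : y ∈ Set.Ioo 0 t := ⟨by linarith, hy1⟩
      have h2 : Real.sqrt (μ₂ x) < Real.sqrt (μ₂ y) := htSM hxI2 hyI2 hxy
      linarith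
  -- endpoint estimate
  have hE : ∀ α : ℝ, α ∈ Set.Ioo 0 α₀ → ∀ t : ℝ, 0 < t → t ≤ μ₂ α →
      (τ - Y 0) * α ^ 2 - k₁ * α + (τ - Y 0) * t ≤ 0 := by
    intro α hα t ht htμ
    have hroot := hrt α hα
    unfold auxP at hroot
    have hμα := hpos α hα
    have h1 : τ - Y 0 ≤ τ - Y (μ₂ α) := hgle (μ₂ α) hμα.le
    have h2 : (τ - Y 0) * (α ^ 2 + t) ≤ (τ - Y (μ₂ α)) * (α ^ 2 + μ₂ α) :=
      mul_le_mul h1 (by linarith) (by nlinarith [sq_nonneg α]) (by linarith)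
    nlinarith
  constructor
  · exact hα₀pos
  refine ⟨μ₂, ?_, ?_, ?_, ?_, ?_⟩
  · -- existence and uniqueness of μ₂
    intro α hα
    refine ⟨⟨hpos α hα, (hiff α (μ₂ α) (hpos α hα)).2 (hrt α hα)⟩, fun μ hμ heq => ?_⟩
    exact huniqroot α hα μ hμ.le ((hiff α μ hμ).1 heq)
  · -- limit at 0⁺
    rw [Metric.tendsto_nhdsWithin_nhds]
    intro ε hε
    refine ⟨min α₀ ((τ - Y 0) * ε ^ 2 / k₁),
      lt_min hα₀pos (div_pos (mul_pos hg (pow_pos hε 2)) hk₁), fun x hx hdist => ?_⟩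
    have hx0 : (0:ℝ) < x := hx
    rw [Real.dist_eq, sub_zero, abs_of_pos hx0] at hdist
    have hxα₀ : x < α₀ := lt_of_lt_of_le hdist (min_le_left _ _)
    have hxε : x < (τ - Y 0) * ε ^ 2 / k₁ := lt_of_lt_of_le hdist (min_le_right _ _)
    have hxm : x ∈ Set.Ioo 0 α₀ := ⟨hx0, hxα₀⟩
    rw [Real.dist_eq, sub_zero, abs_of_nonneg (Real.sqrt_nonneg _), Real.sqrt_lt' hε]
    by_contra h
    push_neg at h
    have hEx := hE x hxm (ε ^ 2) (pow_pos hε 2) h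
    have hkx : k₁ * x < (τ - Y 0) * ε ^ 2 := by
      have := (lt_div_iff₀ hk₁).1 hxε
      linarith
    nlinarith [mul_pos hg (mul_pos hx0 hx0)]
  · -- limit at α₀⁻
    rw [Metric.tendsto_nhdsWithin_nhds]
    intro ε hε
    refine ⟨min α₀ (ε ^ 2 / α₀),
      lt_min hα₀pos (div_pos (pow_pos hε 2) hα₀pos), fun x hx hdist => ?_⟩
    have hxα₀ : x < α₀ := hx
    rw [Real.dist_eq, abs_of_neg (by linarith)] at hdist
    have hd1 : α₀ - x < α₀ := by
      have := lt_of_lt_of_le hdist (min_le_left _ _); linarith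
    have hd2 : α₀ - x < ε ^ 2 / α₀ := by
      have := lt_of_lt_of_le hdist (min_le_right _ _); linarith
    have hx0 : 0 < x := by linarith
    have hxm : x ∈ Set.Ioo 0 α₀ := ⟨hx0, hxα₀⟩
    rw [Real.dist_eq, sub_zero, abs_of_nonneg (Real.sqrt_nonneg _), Real.sqrt_lt' hε]
    by_contra h
    push_neg at h
    have hEx := hE x hxm (ε ^ 2) (pow_pos hε 2) h
    have hd3 : (α₀ - x) * α₀ < ε ^ 2 := (lt_div_iff₀ hα₀pos).1 hd2
    have hk₁x : (τ - Y 0) * α₀ * x = k₁ * x := by rw [hα₀g]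
    have h5 : x ^ 2 - α₀ * x + ε ^ 2 ≤ 0 := by nlinarith [hEx, hk₁x, hg]
    nlinarith [sq_nonneg (α₀ - x)]
  · -- existence and uniqueness of α₂
    exact ⟨s, ⟨hsmem, hSM, hSA⟩, fun t ht => huniq t ht⟩
  · -- properties of the turning point
    intro t ht
    have hts : t = s := huniq t ht
    subst hts
    refine ⟨?_, ?_, ?_, ?_⟩
    · intro α hα
      apply Real.sqrt_le_sqrt
      rw [hμ₂s]
      exact hle_m α hα
    · intro α hα
      have hαm : α ∈ Set.Ioo 0 α₀ := ⟨hα.1, hα.2.trans hsα₀⟩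
      rw [Real.lt_sqrt hα.1.le]
      exact hB1 α hαm hα.2
    · rw [hμ₂s]
    · intro α hα
      have hαm : α ∈ Set.Ioo 0 α₀ := ⟨hs0.trans hα.1, hα.2⟩
      rw [Real.sqrt_lt' (hs0.trans hα.1)]
      exact hB2 α hαm hα.1
end

section
/- Let (γ_n)_{n≥0} be positive reals with inf_n γ_n > 0 and (a_n)_{n≥0} nonnegative reals, not all zero, with Σ_n a_n/γ_n < ∞; define X(0,μ,k₂) := Σ_n a_n(γ_n + 2k₂)/((γ_n + 2k₂)² + μ) and Y(0,μ,k₂) := Σ_n a_n/((γ_n + 2k₂)² + μ). Let ρ₀ > 0, 0 < k₁ < 2ρ₀/3, τ > Σ_n a_n/γ_n², and k₂ > 0 with X(0,0,k₂) > ρ₀ − 2k₁ and X(0,0,k₂) ≤ ρ₀ − 3k₁/2 (i.e. k₂ ≥ k̂₂*, so that λ₁(α) < α for all α > 0). Set α₀ := k₁/(τ − Y(0,0,k₂)); let λ₁(α) be the unique positive solution of X(0, λ₁², k₂) = ρ₀ − k₁(1 + α²/(α² + λ₁²)) for α > 0, and λ₂(α) the unique positive solution of Y(0, λ₂², k₂)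 = τ − k₁α/(α² + λ₂²) for α ∈ (0,α₀), with α₂ ∈ (0,α₀) the unique point where λ₂(α₂) = α₂. Then there exists a unique α* ∈ (0,α₀) with λ₁(α*) = λ₂(α*); moreover α₂ < α* < α₀ and λ₁(α*) < α*. -/
/-!
`λ₁(α)` and `λ₂(α)` are the positive roots of the residuals
`X(l²) - ρ₀ + k₁(1 + α²/(α² + l²))` and `Y(l²) - τ + k₁α/(α² + l²)`, which decrease strictly in `l`
because `X` and `Y` are Stieltjes-type series in `μ = l²`. Hence both curves are continuous, and
each comparison between them reduces to the sign of a residual at a known point: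
`λ₁` increases and `λ₁(α) < α` (the residual at `l = α` is `X(α²) - ρ₀ + 3k₁/2 < 0`);
`λ₂(β) ≥ β` for `β ≤ α₂`, since the residual at `l = β` is antitone in `β` and vanishes at `α₂`;
`λ₂` decreases wherever `λ₂(α) < α`, since `α ↦ α/(α² + l²)` decreases for `α² > l²`;
and `α² + λ₂(α)² ≤ α α₀`, so `λ₂ → 0` as `α → α₀`.
So `λ₁ - λ₂` changes sign on `[α₂, α₀)`, and two crossings `β < β'` would give
`λ₁(β) < λ₁(β') = λ₂(β') < λ₂(β) = λ₁(β)`.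
-/

open Set Filter Topology

noncomputable def stieltjesSum (c d : ℕ → ℝ) (μ : ℝ) : ℝ := ∑' n, c n / (d n + μ)

section StieltjesSum

variable {c d : ℕ → ℝ}

theorem summable_div_add (hc : ∀ n, 0 ≤ c n) (hd : ∀ n, 0 < d n)
    (hs : Summable fun n => c n / d n) {μ : ℝ} (hμ : 0 ≤ μ) :
    Summable fun n => c n / (d n + μ) :=
  hs.of_nonneg_of_le (fun n => div_nonneg (hc n) (by linarith [hd n]))
    (fun n => div_le_div_of_nonneg_left (hc n) (hd n) (by linarith))

theorem stieltjesSum_strictAntiOn (hc : ∀ n, 0 ≤ c n) (hd : ∀ n, 0 < d n)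
    (hs : Summable fun n => c n / d n) (hne : ∃ n, 0 < c n) :
    StrictAntiOn (stieltjesSum c d) (Ici 0) := by
  obtain ⟨n₀, hn₀⟩ := hne
  intro μ (hμ : 0 ≤ μ) μ' (hμ' : 0 ≤ μ') hlt
  exact Summable.tsum_lt_tsum (i := n₀)
    (fun n => div_le_div_of_nonneg_left (hc n) (by linarith [hd n]) (by linarith))
    (div_lt_div_of_pos_left hn₀ (by linarith [hd n₀]) (by linarith))
    (summable_div_add hc hd hs hμ') (summable_div_add hc hd hs hμ)

end StieltjesSum

section Summability

variable {a γ b : ℕ → ℝ}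

theorem summable_mul_div_sq_of_le (ha : ∀ n, 0 ≤ a n) (hγ : ∀ n, 0 < γ n)
    (hγb : ∀ n, γ n ≤ b n) (hs : Summable fun n => a n / γ n) :
    Summable fun n => a n * b n / b n ^ 2 := by
  have hb : ∀ n, 0 < b n := fun n => (hγ n).trans_le (hγb n)
  refine hs.of_nonneg_of_le (fun n => div_nonneg (mul_nonneg (ha n) (hb n).le) (sq_nonneg _))
    (fun n => ?_)
  calc a n * b n / b n ^ 2 = a n / b n := by field_simp [(hb n).ne']
    _ ≤ a n / γ n := div_le_div_of_nonneg_left (ha n) (hγ n) (hγb n)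

theorem summable_div_sq_of_le {c : ℝ} (ha : ∀ n, 0 ≤ a n) (hc : 0 < c) (hγ : ∀ n, c ≤ γ n)
    (hγb : ∀ n, γ n ≤ b n) (hs : Summable fun n => a n / γ n) :
    Summable fun n => a n / b n ^ 2 := by
  refine (hs.div_const c).of_nonneg_of_le (fun n => div_nonneg (ha n) (sq_nonneg _)) (fun n => ?_)
  have hγc : 0 < γ n * c := mul_pos (hc.trans_le (hγ n)) hc
  have hle : γ n * c ≤ b n ^ 2 := by nlinarith [hγ n, hγb n]
  rw [div_div]
  exact div_le_div_of_nonneg_left (ha n) hγc hle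

end Summability

noncomputable def freqResidual₁ (X : ℝ → ℝ) (ρ₀ k₁ α l : ℝ) : ℝ :=
  X (l ^ 2) - ρ₀ + k₁ * (1 + α ^ 2 / (α ^ 2 + l ^ 2))

noncomputable def freqResidual₂ (Y : ℝ → ℝ) (τ k₁ α l : ℝ) : ℝ :=
  Y (l ^ 2) - τ + k₁ * α / (α ^ 2 + l ^ 2)

theorem div_add_sq_strictAntiOn {p q : ℝ} (hp : 0 < p) (hq : 0 ≤ q) :
    StrictAntiOn (fun l => p / (q + l ^ 2)) (Ioi 0) := fun x (hx : 0 < x) y _ hxy =>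
  div_lt_div_of_pos_left hp (add_pos_of_nonneg_of_pos hq (pow_pos hx 2)) (by nlinarith)

theorem sq_div_sq_add_sq_lt {α α' l : ℝ} (hα : 0 < α) (hαα' : α < α') (hl : l ≠ 0) :
    α ^ 2 / (α ^ 2 + l ^ 2) < α' ^ 2 / (α' ^ 2 + l ^ 2) := by
  have hsq : α ^ 2 < α' ^ 2 := by nlinarith
  rw [div_lt_div_iff₀ (by positivity) (by positivity)]
  nlinarith [mul_lt_mul_of_pos_right hsq (by positivity : 0 < l ^ 2)]

theorem mul_div_sq_add_sq_lt {k β β' l : ℝ} (hk : 0 < k) (hβ : 0 < β) (hββ' : β < β')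
    (hl : l ^ 2 < β * β') : k * β' / (β' ^ 2 + l ^ 2) < k * β / (β ^ 2 + l ^ 2) := by
  have hβ' : 0 < β' := hβ.trans hββ'
  rw [div_lt_div_iff₀ (by positivity) (by positivity)]
  nlinarith [mul_pos hk (mul_pos (sub_pos.2 hββ') (sub_pos.2 hl))]

theorem continuousOn_of_strictAntiOn_root {S : Set ℝ} {h : ℝ → ℝ → ℝ} {r : ℝ → ℝ}
    (hpos : ∀ β ∈ S, 0 < r β) (hroot : ∀ β ∈ S, h β (r β) = 0)
    (hanti : ∀ β ∈ S, StrictAntiOn (h β) (Ioi 0))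
    (hcont : ∀ l, 0 < l → ContinuousOn (fun β => h β l) S) : ContinuousOn r S := by
  intro α hα
  refine tendsto_order.2 ⟨fun m hm => ?_, fun M hM => ?_⟩
  · set m' := max m (r α / 2)
    have hm' : 0 < m' := lt_max_of_lt_right (half_pos (hpos α hα))
    have hm'r : m' < r α := max_lt hm (half_lt_self (hpos α hα))
    have hsign : 0 < h α m' := hroot α hα ▸ hanti α hα hm' (hpos α hα) hm'r
    filter_upwards [(hcont m' hm' α hα).eventually (lt_mem_nhds hsign), self_mem_nhdsWithin]
      with β hβ hβS
    rw [← hroot β hβS, (hanti β hβS).lt_iff_gt (hpos β hβS) hm'] at hβ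
    exact (le_max_left m _).trans_lt hβ
  · have hM : 0 < M := (hpos α hα).trans hM
    have hsign : h α M < 0 := hroot α hα ▸ hanti α hα (hpos α hα) hM ‹r α < M›
    filter_upwards [(hcont M hM α hα).eventually (gt_mem_nhds hsign), self_mem_nhdsWithin]
      with β hβ hβS
    rwa [← hroot β hβS, (hanti β hβS).lt_iff_gt hM (hpos β hβS)] at hβ

section FrequencyCurves

variable {X Y : ℝ → ℝ} {ρ₀ k₁ τ α l : ℝ}

theorem freqResidual₁_strictAntiOn (hX : AntitoneOn X (Ici 0)) (hk₁ : 0 < k₁) (hα : 0 < α) :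
    StrictAntiOn (freqResidual₁ X ρ₀ k₁ α) (Ioi 0) := by
  intro x (hx : 0 < x) y (hy : 0 < y) hxy
  have hXle : X (y ^ 2) ≤ X (x ^ 2) :=
    hX (sq_nonneg x) (sq_nonneg y) (pow_le_pow_left₀ hx.le hxy.le 2)
  have hfrac := div_add_sq_strictAntiOn (pow_pos hα 2) (sq_nonneg α) hx hy hxy
  have := mul_lt_mul_of_pos_left (add_lt_add_left hfrac 1) hk₁
  simp only [freqResidual₁] at this ⊢
  linarith

theorem freqResidual₂_strictAntiOn (hY : AntitoneOn Y (Ici 0)) (hk₁ : 0 < k₁) (hα : 0 < α) :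
    StrictAntiOn (freqResidual₂ Y τ k₁ α) (Ioi 0) := by
  intro x (hx : 0 < x) y (hy : 0 < y) hxy
  have hYle : Y (y ^ 2) ≤ Y (x ^ 2) :=
    hY (sq_nonneg x) (sq_nonneg y) (pow_le_pow_left₀ hx.le hxy.le 2)
  have hfrac := div_add_sq_strictAntiOn (mul_pos hk₁ hα) (sq_nonneg α) hx hy hxy
  simp only [freqResidual₂] at hfrac ⊢
  linarith

theorem continuous_freqResidual₁_left (hl : l ≠ 0) :
    Continuous fun α => freqResidual₁ X ρ₀ k₁ α l := by
  have hden : ∀ α : ℝ, α ^ 2 + l ^ 2 ≠ 0 := fun α => by positivity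
  unfold freqResidual₁
  fun_prop (disch := exact hden _)

theorem continuous_freqResidual₂_left (hl : l ≠ 0) :
    Continuous fun α => freqResidual₂ Y τ k₁ α l := by
  have hden : ∀ α : ℝ, α ^ 2 + l ^ 2 ≠ 0 := fun α => by positivity
  unfold freqResidual₂
  fun_prop (disch := exact hden _)

theorem freqResidual₁_self_neg (hX : StrictAntiOn X (Ici 0)) (h2 : X 0 ≤ ρ₀ - 3 * k₁ / 2)
    (hα : α ≠ 0) : freqResidual₁ X ρ₀ k₁ α α < 0 := by
  have hXlt : X (α ^ 2) < X 0 := hX self_mem_Ici (sq_nonneg α) (by positivity)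
  have hhalf : α ^ 2 / (α ^ 2 + α ^ 2) = 1 / 2 := by field_simp; ring
  rw [freqResidual₁, hhalf]
  linarith

theorem freqResidual₂_self_antitoneOn (hY : AntitoneOn Y (Ici 0)) (hk₁ : 0 < k₁) :
    AntitoneOn (fun β => freqResidual₂ Y τ k₁ β β) (Ioi 0) := by
  intro β (hβ : 0 < β) β' (hβ' : 0 < β') hle
  have hYle : Y (β' ^ 2) ≤ Y (β ^ 2) :=
    hY (sq_nonneg β) (sq_nonneg β') (pow_le_pow_left₀ hβ.le hle 2)
  have hdiag : ∀ x : ℝ, 0 < x → k₁ * x / (x ^ 2 + x ^ 2) = k₁ / (2 * x) := fun x hx => by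
    field_simp; ring
  have hfrac : k₁ / (2 * β') ≤ k₁ / (2 * β) :=
    div_le_div_of_nonneg_left hk₁.le (by positivity) (by linarith)
  simp only [freqResidual₂, hdiag β hβ, hdiag β' hβ']
  linarith

theorem lt_of_freqResidual₁_eq_zero (hX : StrictAntiOn X (Ici 0))
    (h2 : X 0 ≤ ρ₀ - 3 * k₁ / 2) (hk₁ : 0 < k₁) (hα : 0 < α) (hl : 0 < l)
    (h : freqResidual₁ X ρ₀ k₁ α l = 0) : l < α :=
  ((freqResidual₁_strictAntiOn hX.antitoneOn hk₁ hα).lt_iff_gt hα hl).1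
    (h ▸ freqResidual₁_self_neg hX h2 hα.ne')

theorem lt_of_freqResidual₁_eq_zero_of_lt {α' l' : ℝ} (hX : AntitoneOn X (Ici 0))
    (hk₁ : 0 < k₁) (hα : 0 < α) (hαα' : α < α') (hl : 0 < l) (hl' : 0 < l')
    (h : freqResidual₁ X ρ₀ k₁ α l = 0) (h' : freqResidual₁ X ρ₀ k₁ α' l' = 0) : l < l' := by
  have hshift : freqResidual₁ X ρ₀ k₁ α l < freqResidual₁ X ρ₀ k₁ α' l := by
    have := mul_lt_mul_of_pos_left
      (add_lt_add_left (sq_div_sq_add_sq_lt hα hαα' hl.ne') 1) hk₁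
    simp only [freqResidual₁]
    linarith
  rw [h, ← h'] at hshift
  exact ((freqResidual₁_strictAntiOn hX hk₁ (hα.trans hαα')).lt_iff_gt hl' hl).1 hshift

theorem lt_of_freqResidual₂_eq_zero_of_lt {β β' l' : ℝ} (hY : AntitoneOn Y (Ici 0))
    (hk₁ : 0 < k₁) (hβ : 0 < β) (hββ' : β < β') (hl : 0 < l) (hlβ : l < β) (hl' : 0 < l')
    (h : freqResidual₂ Y τ k₁ β l = 0) (h' : freqResidual₂ Y τ k₁ β' l' = 0) : l' < l := by
  have hshift : freqResidual₂ Y τ k₁ β' l < freqResidual₂ Y τ k₁ β l := by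
    have := mul_div_sq_add_sq_lt hk₁ hβ hββ' (by nlinarith : l ^ 2 < β * β')
    simp only [freqResidual₂]
    linarith
  rw [h, ← h'] at hshift
  exact ((freqResidual₂_strictAntiOn hY hk₁ (hβ.trans hββ')).lt_iff_gt hl hl').1 hshift

theorem le_of_freqResidual₂_eq_zero {β α₂ : ℝ} (hY : AntitoneOn Y (Ici 0)) (hk₁ : 0 < k₁)
    (hβ : 0 < β) (hβα₂ : β ≤ α₂) (hfix : freqResidual₂ Y τ k₁ α₂ α₂ = 0) (hl : 0 < l)
    (h : freqResidual₂ Y τ k₁ β l = 0) : β ≤ l := by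
  have hdiag : freqResidual₂ Y τ k₁ α₂ α₂ ≤ freqResidual₂ Y τ k₁ β β :=
    freqResidual₂_self_antitoneOn hY hk₁ hβ (hβ.trans_le hβα₂) hβα₂
  rw [hfix, ← h] at hdiag
  exact ((freqResidual₂_strictAntiOn hY hk₁ hβ).le_iff_ge hl hβ).1 hdiag

theorem sq_add_sq_le_of_freqResidual₂_eq_zero {α₀ : ℝ} (hY : AntitoneOn Y (Ici 0))
    (hk₁ : 0 < k₁) (hα : 0 < α) (hα₀ : 0 < α₀) (hτY : τ - Y 0 = k₁ / α₀)
    (h : freqResidual₂ Y τ k₁ α l = 0) : α ^ 2 + l ^ 2 ≤ α * α₀ := by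
  have hYle : Y (l ^ 2) ≤ Y 0 := hY self_mem_Ici (sq_nonneg l) (sq_nonneg l)
  have hbound : k₁ / α₀ ≤ k₁ * α / (α ^ 2 + l ^ 2) := by
    rw [freqResidual₂] at h
    linarith
  rw [div_le_div_iff₀ hα₀ (by positivity)] at hbound
  exact le_of_mul_le_mul_left (by linarith) hk₁

end FrequencyCurves

section Crossing

variable {X Y : ℝ → ℝ} {ρ₀ k₁ τ α₀ α₂ : ℝ} {lam₁ lam₂ : ℝ → ℝ}

theorem continuousOn_of_freqResidual₁_eq_zero {S : Set ℝ} (hX : AntitoneOn X (Ici 0))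
    (hk₁ : 0 < k₁) (hS : S ⊆ Ioi 0)
    (hr₁ : ∀ α ∈ S, 0 < lam₁ α ∧ freqResidual₁ X ρ₀ k₁ α (lam₁ α) = 0) :
    ContinuousOn lam₁ S :=
  continuousOn_of_strictAntiOn_root (fun α hα => (hr₁ α hα).1) (fun α hα => (hr₁ α hα).2)
    (fun _ hα => freqResidual₁_strictAntiOn hX hk₁ (hS hα))
    (fun _ hl => (continuous_freqResidual₁_left hl.ne').continuousOn)

theorem continuousOn_of_freqResidual₂_eq_zero {S : Set ℝ} (hY : AntitoneOn Y (Ici 0))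
    (hk₁ : 0 < k₁) (hS : S ⊆ Ioi 0)
    (hr₂ : ∀ α ∈ S, 0 < lam₂ α ∧ freqResidual₂ Y τ k₁ α (lam₂ α) = 0) :
    ContinuousOn lam₂ S :=
  continuousOn_of_strictAntiOn_root (fun α hα => (hr₂ α hα).1) (fun α hα => (hr₂ α hα).2)
    (fun _ hα => freqResidual₂_strictAntiOn hY hk₁ (hS hα))
    (fun _ hl => (continuous_freqResidual₂_left hl.ne').continuousOn)

theorem exists_crossing (hX : StrictAntiOn X (Ici 0)) (h2 : X 0 ≤ ρ₀ - 3 * k₁ / 2)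
    (hY : AntitoneOn Y (Ici 0)) (hk₁ : 0 < k₁) (hτY : τ - Y 0 = k₁ / α₀)
    (hr₁ : ∀ α, 0 < α → 0 < lam₁ α ∧ freqResidual₁ X ρ₀ k₁ α (lam₁ α) = 0)
    (hr₂ : ∀ α ∈ Ioo 0 α₀, 0 < lam₂ α ∧ freqResidual₂ Y τ k₁ α (lam₂ α) = 0)
    (hα₂ : α₂ ∈ Ioo 0 α₀) (hfix : lam₂ α₂ = α₂) :
    ∃ αs ∈ Ioo 0 α₀, lam₁ αs = lam₂ αs := by
  have hα₀ : 0 < α₀ := hα₂.1.trans hα₂.2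
  have hL : 0 < lam₁ α₂ := (hr₁ α₂ hα₂.1).1
  -- `α² + λ₂(α)² ≤ α α₀` forces `λ₂(α) → 0` as `α → α₀`.
  have hsmall : Tendsto (fun α => α * α₀ - α ^ 2) (𝓝[<] α₀) (𝓝 0) := by
    have := ((by fun_prop : Continuous fun α : ℝ => α * α₀ - α ^ 2).tendsto α₀)
    rw [show α₀ * α₀ - α₀ ^ 2 = 0 by ring] at this
    exact this.mono_left nhdsWithin_le_nhds
  obtain ⟨α', ⟨hα₂α', hα'α₀⟩, hα'small⟩ : ∃ α' ∈ Ioo α₂ α₀, α' * α₀ - α' ^ 2 < lam₁ α₂ ^ 2 :=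
    (Filter.Eventually.and (Ioo_mem_nhdsLT hα₂.2)
      (hsmall.eventually (gt_mem_nhds (pow_pos hL 2)))).exists
  have hsub : Icc α₂ α' ⊆ Ioo 0 α₀ := Icc_subset_Ioo hα₂.1 hα'α₀
  have hα' : α' ∈ Ioo 0 α₀ := hsub (right_mem_Icc.2 hα₂α'.le)
  have hlam₂α' : lam₂ α' < lam₁ α₂ := by
    have := sq_add_sq_le_of_freqResidual₂_eq_zero hY hk₁ hα'.1 hα₀ hτY (hr₂ α' hα').2
    exact lt_of_pow_lt_pow_left₀ 2 hL.le (by linarith)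
  have hlam₁α' : lam₁ α₂ < lam₁ α' :=
    lt_of_freqResidual₁_eq_zero_of_lt hX.antitoneOn hk₁ hα₂.1 hα₂α' hL (hr₁ α' hα'.1).1
      (hr₁ α₂ hα₂.1).2 (hr₁ α' hα'.1).2
  have hlam₁α₂ : lam₁ α₂ < α₂ :=
    lt_of_freqResidual₁_eq_zero hX h2 hk₁ hα₂.1 hL (hr₁ α₂ hα₂.1).2
  have hcont : ContinuousOn (fun α => lam₁ α - lam₂ α) (Icc α₂ α') :=
    ((continuousOn_of_freqResidual₁_eq_zero hX.antitoneOn hk₁ (fun _ h => h) hr₁).mono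
      (hsub.trans Ioo_subset_Ioi_self)).sub
      ((continuousOn_of_freqResidual₂_eq_zero hY hk₁ Ioo_subset_Ioi_self hr₂).mono hsub)
  have hsign : (0 : ℝ) ∈ Icc (lam₁ α₂ - lam₂ α₂) (lam₁ α' - lam₂ α') :=
    ⟨by linarith, by linarith⟩
  obtain ⟨αs, hαs, hzero⟩ := intermediate_value_Icc hα₂α'.le hcont hsign
  exact ⟨αs, hsub hαs, sub_eq_zero.1 hzero⟩

theorem lt_and_lt_of_crossing (hX : StrictAntiOn X (Ici 0)) (h2 : X 0 ≤ ρ₀ - 3 * k₁ / 2)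
    (hY : AntitoneOn Y (Ici 0)) (hk₁ : 0 < k₁)
    (hr₁ : ∀ α, 0 < α → 0 < lam₁ α ∧ freqResidual₁ X ρ₀ k₁ α (lam₁ α) = 0)
    (hr₂ : ∀ α ∈ Ioo 0 α₀, 0 < lam₂ α ∧ freqResidual₂ Y τ k₁ α (lam₂ α) = 0)
    (hα₂ : α₂ ∈ Ioo 0 α₀) (hfix : lam₂ α₂ = α₂) {αs : ℝ} (hαs : αs ∈ Ioo 0 α₀)
    (heq : lam₁ αs = lam₂ αs) : α₂ < αs ∧ lam₁ αs < αs := by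
  have hlt : lam₁ αs < αs :=
    lt_of_freqResidual₁_eq_zero hX h2 hk₁ hαs.1 (hr₁ αs hαs.1).1 (hr₁ αs hαs.1).2
  refine ⟨lt_of_not_ge fun hle => ?_, hlt⟩
  have hfix' := (hr₂ α₂ hα₂).2
  rw [hfix] at hfix'
  have := le_of_freqResidual₂_eq_zero hY hk₁ hαs.1 hle hfix' (hr₂ αs hαs).1 (hr₂ αs hαs).2
  linarith

theorem eq_of_crossing (hX : StrictAntiOn X (Ici 0)) (h2 : X 0 ≤ ρ₀ - 3 * k₁ / 2)
    (hY : AntitoneOn Y (Ici 0)) (hk₁ : 0 < k₁)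
    (hr₁ : ∀ α, 0 < α → 0 < lam₁ α ∧ freqResidual₁ X ρ₀ k₁ α (lam₁ α) = 0)
    (hr₂ : ∀ α ∈ Ioo 0 α₀, 0 < lam₂ α ∧ freqResidual₂ Y τ k₁ α (lam₂ α) = 0)
    {β β' : ℝ} (hβ : β ∈ Ioo 0 α₀) (hβ' : β' ∈ Ioo 0 α₀)
    (heq : lam₁ β = lam₂ β) (heq' : lam₁ β' = lam₂ β') : β = β' := by
  wlog hββ' : β < β' generalizing β β'
  · rcases (not_lt.1 hββ').lt_or_eq with h | h
    · exact (this hβ' hβ heq' heq h).symm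
    · exact h.symm
  have hlt : lam₂ β < β :=
    heq ▸ lt_of_freqResidual₁_eq_zero hX h2 hk₁ hβ.1 (hr₁ β hβ.1).1 (hr₁ β hβ.1).2
  have h₁ : lam₁ β < lam₁ β' :=
    lt_of_freqResidual₁_eq_zero_of_lt hX.antitoneOn hk₁ hβ.1 hββ' (hr₁ β hβ.1).1
      (hr₁ β' hβ'.1).1 (hr₁ β hβ.1).2 (hr₁ β' hβ'.1).2
  have h₂ : lam₂ β' < lam₂ β :=
    lt_of_freqResidual₂_eq_zero_of_lt hY hk₁ hβ.1 hββ' (hr₂ β hβ).1 hlt (hr₂ β' hβ').1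
      (hr₂ β hβ).2 (hr₂ β' hβ').2
  linarith

end Crossing

theorem stmt_15_general (γ a : ℕ → ℝ) (c : ℝ) (hc : 0 < c) (hγ : ∀ n, c ≤ γ n)
    (ha : ∀ n, 0 ≤ a n) (hne : ∃ n, a n ≠ 0)
    (hsum : Summable fun n => a n / γ n)
    (ρ₀ k₁ k₂ τ : ℝ) (hk₁ : 0 < k₁) (hk₂ : 0 < k₂)
    (X Y : ℝ → ℝ)
    (hX : ∀ μ, X μ = ∑' n, a n * (γ n + 2 * k₂) / ((γ n + 2 * k₂) ^ 2 + μ))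
    (hY : ∀ μ, Y μ = ∑' n, a n / ((γ n + 2 * k₂) ^ 2 + μ))
    (h2 : X 0 ≤ ρ₀ - 3 * k₁ / 2)
    (α₀ : ℝ) (hα₀ : α₀ = k₁ / (τ - Y 0))
    (lam₁ lam₂ : ℝ → ℝ)
    (hlam₁ : ∀ α : ℝ, 0 < α → 0 < lam₁ α ∧
      X ((lam₁ α) ^ 2) = ρ₀ - k₁ * (1 + α ^ 2 / (α ^ 2 + (lam₁ α) ^ 2)) ∧
      ∀ l : ℝ, 0 < l → X (l ^ 2) = ρ₀ - k₁ * (1 + α ^ 2 / (α ^ 2 + l ^ 2)) → l = lam₁ α)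
    (hlam₂ : ∀ α ∈ Set.Ioo 0 α₀, 0 < lam₂ α ∧
      Y ((lam₂ α) ^ 2) = τ - k₁ * α / (α ^ 2 + (lam₂ α) ^ 2) ∧
      ∀ l : ℝ, 0 < l → Y (l ^ 2) = τ - k₁ * α / (α ^ 2 + l ^ 2) → l = lam₂ α)
    (α₂ : ℝ) (hα₂ : α₂ ∈ Set.Ioo 0 α₀) (hfix : lam₂ α₂ = α₂) :
    (∃! αs : ℝ, αs ∈ Set.Ioo 0 α₀ ∧ lam₁ αs = lam₂ αs) ∧
    ∀ αs ∈ Set.Ioo 0 α₀, lam₁ αs = lam₂ αs → α₂ < αs ∧ lam₁ αs < αs := by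
  obtain ⟨n₀, hn₀⟩ := hne
  have ha₀ : 0 < a n₀ := (ha n₀).lt_of_ne' hn₀
  have hγpos : ∀ n, 0 < γ n := fun n => hc.trans_le (hγ n)
  have hγb : ∀ n, γ n ≤ γ n + 2 * k₂ := fun n => by linarith
  have hb : ∀ n, 0 < γ n + 2 * k₂ := fun n => (hγpos n).trans_le (hγb n)
  have hXanti : StrictAntiOn X (Ici 0) := by
    rw [show X = stieltjesSum _ _ from funext hX]
    exact stieltjesSum_strictAntiOn (fun n => mul_nonneg (ha n) (hb n).le)
      (fun n => pow_pos (hb n) 2) (summable_mul_div_sq_of_le ha hγpos hγb hsum)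
      ⟨n₀, mul_pos ha₀ (hb n₀)⟩
  have hYanti : AntitoneOn Y (Ici 0) := by
    rw [show Y = stieltjesSum _ _ from funext hY]
    exact (stieltjesSum_strictAntiOn ha (fun n => pow_pos (hb n) 2)
      (summable_div_sq_of_le ha hc hγ hγb hsum) ⟨n₀, ha₀⟩).antitoneOn
  have hτY : τ - Y 0 = k₁ / α₀ := by rw [hα₀, div_div_cancel₀ hk₁.ne']
  have hr₁ : ∀ α, 0 < α → 0 < lam₁ α ∧ freqResidual₁ X ρ₀ k₁ α (lam₁ α) = 0 := fun α hα =>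
    ⟨(hlam₁ α hα).1, by rw [freqResidual₁, (hlam₁ α hα).2.1]; ring⟩
  have hr₂ : ∀ α ∈ Ioo 0 α₀, 0 < lam₂ α ∧ freqResidual₂ Y τ k₁ α (lam₂ α) = 0 := fun α hα =>
    ⟨(hlam₂ α hα).1, by rw [freqResidual₂, (hlam₂ α hα).2.1]; ring⟩
  obtain ⟨αs, hαs, heq⟩ := exists_crossing hXanti h2 hYanti hk₁ hτY hr₁ hr₂ hα₂ hfix
  exact ⟨⟨αs, ⟨hαs, heq⟩, fun β ⟨hβ, hβeq⟩ =>
      eq_of_crossing hXanti h2 hYanti hk₁ hr₁ hr₂ hβ hαs hβeq heq⟩,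
    fun β hβ hβeq => lt_and_lt_of_crossing hXanti h2 hYanti hk₁ hr₁ hr₂ hα₂ hfix hβ hβeq⟩

/-- Existence and uniqueness of the limiting Hopf point `α* ∈ (0, α₀)`, the unique
intersection of the two frequency curves `λ₁` and `λ₂`; moreover `α₂ < α* < α₀` and
`λ₁(α*) < α*`. -/
theorem stmt_15 (γ a : ℕ → ℝ) (c : ℝ) (hc : 0 < c) (hγ : ∀ n, c ≤ γ n)
    (ha : ∀ n, 0 ≤ a n) (hne : ∃ n, a n ≠ 0)
    (hsum : Summable fun n => a n / γ n)
    (ρ₀ k₁ k₂ τ : ℝ) (hρ : 0 < ρ₀) (hk₁ : 0 < k₁) (hk₁' : k₁ < 2 * ρ₀ / 3) (hk₂ : 0 < k₂)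
    (hτ : (∑' n, a n / (γ n) ^ 2) < τ)
    (X Y : ℝ → ℝ)
    (hX : ∀ μ, X μ = ∑' n, a n * (γ n + 2 * k₂) / ((γ n + 2 * k₂) ^ 2 + μ))
    (hY : ∀ μ, Y μ = ∑' n, a n / ((γ n + 2 * k₂) ^ 2 + μ))
    (h1 : ρ₀ - 2 * k₁ < X 0) (h2 : X 0 ≤ ρ₀ - 3 * k₁ / 2)
    (α₀ : ℝ) (hα₀ : α₀ = k₁ / (τ - Y 0))
    (lam₁ lam₂ : ℝ → ℝ)
    (hlam₁ : ∀ α : ℝ, 0 < α → 0 < lam₁ α ∧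
      X ((lam₁ α) ^ 2) = ρ₀ - k₁ * (1 + α ^ 2 / (α ^ 2 + (lam₁ α) ^ 2)) ∧
      ∀ l : ℝ, 0 < l → X (l ^ 2) = ρ₀ - k₁ * (1 + α ^ 2 / (α ^ 2 + l ^ 2)) → l = lam₁ α)
    (hlam₂ : ∀ α ∈ Set.Ioo 0 α₀, 0 < lam₂ α ∧
      Y ((lam₂ α) ^ 2) = τ - k₁ * α / (α ^ 2 + (lam₂ α) ^ 2) ∧
      ∀ l : ℝ, 0 < l → Y (l ^ 2) = τ - k₁ * α / (α ^ 2 + l ^ 2) → l = lam₂ α)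
    (α₂ : ℝ) (hα₂ : α₂ ∈ Set.Ioo 0 α₀) (hfix : lam₂ α₂ = α₂)
    (huniq : ∀ β ∈ Set.Ioo 0 α₀, lam₂ β = β → β = α₂) :
    (∃! αs : ℝ, αs ∈ Set.Ioo 0 α₀ ∧ lam₁ αs = lam₂ αs) ∧
    ∀ αs ∈ Set.Ioo 0 α₀, lam₁ αs = lam₂ αs → α₂ < αs ∧ lam₁ αs < αs :=
  stmt_15_general γ a c hc hγ ha hne hsum ρ₀ k₁ k₂ τ hk₁ hk₂ X Y hX hY h2 α₀ hα₀ lam₁ lam₂ hlam₁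
    hlam₂ α₂ hα₂ hfix
end
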